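/- arXiv:2604.26754 — 11 statements merged into one kernel-verified Lean document; each statement's English description precedes it below -/
import Mathlib

section
/- Quantitative stability of the Hilbert inner product (upper bound): Let H be a real inner product space, let ε ∈ (0,1), and let n ≥ 2 be an integer. Suppose x_1,…,x_n and y_1,…,y_n are vectors in H with ‖x_i‖ ≤ 1 and ‖y_i‖ ≤ 1 for all i, and such that ⟪x_i, y_j⟫ − ⟪x_j, y_i⟫ ≥ ε for all 1 ≤ i < j ≤ n. Then log n ≤ π/ε + 1; in particular n ≤ exp(π/ε + 1). -/
open RealInnerProductSpace Real

/-!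
With `z_j = x_j + i y_j` in the complexification of `H`, the function
`θ ↦ ‖∑ⱼ e^{ijθ} z_j‖²` is nonnegative. Integrating it against the weight `2π - θ` on
`[0, 2π]`, whose integral against `e^{ikθ}` is `2π²` for `k = 0` and `2πi / k` otherwise, gives
the Hilbert-type inequality `∑_{i ≠ j} B_{ij} / (j - i) ≤ π ∑ᵢ (‖x_i‖² + ‖y_i‖²) ≤ 2πn` for
`B_{ij} = ⟪x_i, y_j⟫ - ⟪x_j, y_i⟫`. On a half-graph every term is at least `ε / |j - i|`, and
`∑_{i ≠ j} 1 / |j - i| = 2 (n · harmonic n - n)`, so `harmonic n ≤ π / ε + 1`, while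
`log n ≤ harmonic n`.
-/

open Finset intervalIntegral

lemma integral_two_pi_sub_mul_cos_int_mul (k : ℤ) :
    ∫ θ in (0 : ℝ)..2 * π, (2 * π - θ) * cos (k * θ) = if k = 0 then 2 * π ^ 2 else 0 := by
  split_ifs with hk
  · simp only [hk, Int.cast_zero, zero_mul, cos_zero, mul_one]
    rw [integral_sub intervalIntegrable_const intervalIntegral.intervalIntegrable_id,
      integral_const, integral_id]
    simp only [sub_zero, smul_eq_mul]
    ring
  have hk' : (k : ℝ) ≠ 0 := by exact_mod_cast hk
  have hderiv : ∀ θ ∈ Set.uIcc 0 (2 * π), HasDerivAt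
      (fun t => (2 * π - t) * sin (k * t) / k - cos (k * t) / k ^ 2)
      ((2 * π - θ) * cos (k * θ)) θ := by
    intro θ _
    have hlin : HasDerivAt (fun t => (k : ℝ) * t) k θ := by
      simpa using (hasDerivAt_id θ).const_mul (k : ℝ)
    have hsub : HasDerivAt (fun t => 2 * π - t) (-1) θ := by
      simpa using (hasDerivAt_id θ).const_sub (2 * π)
    refine (((hsub.mul hlin.sin).div_const _).sub (hlin.cos.div_const _)).congr_deriv ?_
    field_simp
    ring
  rw [integral_eq_sub_of_hasDerivAt hderiv (Continuous.intervalIntegrable (by fun_prop) _ _)]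
  simp [cos_int_mul_two_pi]

/-- For `k = 0` both sides vanish, the right one because `2 * π / 0 = 0`. -/
lemma integral_two_pi_sub_mul_sin_int_mul (k : ℤ) :
    ∫ θ in (0 : ℝ)..2 * π, (2 * π - θ) * sin (k * θ) = 2 * π / k := by
  rcases eq_or_ne k 0 with rfl | hk
  · simp
  have hk' : (k : ℝ) ≠ 0 := by exact_mod_cast hk
  have hderiv : ∀ θ ∈ Set.uIcc 0 (2 * π), HasDerivAt
      (fun t => -((2 * π - t) * cos (k * t)) / k - sin (k * t) / k ^ 2)
      ((2 * π - θ) * sin (k * θ)) θ := by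
    intro θ _
    have hlin : HasDerivAt (fun t => (k : ℝ) * t) k θ := by
      simpa using (hasDerivAt_id θ).const_mul (k : ℝ)
    have hsub : HasDerivAt (fun t => 2 * π - t) (-1) θ := by
      simpa using (hasDerivAt_id θ).const_sub (2 * π)
    refine ((((hsub.mul hlin.cos).neg).div_const _).sub (hlin.sin.div_const _)).congr_deriv ?_
    field_simp
    ring
  have hsin : sin (k * (2 * π)) = 0 := by simpa using sin_add_int_mul_two_pi 0 k
  rw [integral_eq_sub_of_hasDerivAt hderiv (Continuous.intervalIntegrable (by fun_prop) _ _)]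
  simp [cos_int_mul_two_pi, hsin]
  ring

lemma integral_two_pi_sub_mul_cos_mul_sub_sin_mul (k : ℤ) (a b : ℝ) :
    ∫ θ in (0 : ℝ)..2 * π, (2 * π - θ) * (cos (k * θ) * a - sin (k * θ) * b) =
      (if k = 0 then 2 * π ^ 2 else 0) * a - 2 * π / k * b := by
  have hsplit : ∀ θ : ℝ, (2 * π - θ) * (cos (k * θ) * a - sin (k * θ) * b) =
      (2 * π - θ) * cos (k * θ) * a - (2 * π - θ) * sin (k * θ) * b := fun θ => by ring
  simp_rw [hsplit]
  rw [integral_sub (Continuous.intervalIntegrable (by fun_prop) _ _)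
      (Continuous.intervalIntegrable (by fun_prop) _ _),
    integral_mul_const, integral_mul_const, integral_two_pi_sub_mul_cos_int_mul,
    integral_two_pi_sub_mul_sin_int_mul]

lemma sum_range_harmonic (n : ℕ) : ∑ i ∈ range n, harmonic i = n * harmonic n - n := by
  induction n with
  | zero => simp
  | succ n ih =>
    rw [sum_range_succ, ih, harmonic_succ]
    push_cast
    field_simp
    ring

lemma sum_range_inv_abs_sub (n : ℕ) : ∑ i ∈ range n, |(n : ℝ) - i|⁻¹ = harmonic n := by
  rw [← sum_range_reflect, harmonic]
  push_cast
  refine sum_congr rfl fun i hi => ?_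
  have hcast : ((n - 1 - i : ℕ) : ℝ) = n - (i + 1) := by
    rw [Nat.sub_sub, Nat.cast_sub (by rw [mem_range] at hi; omega)]
    push_cast
    ring
  rw [hcast, sub_sub_cancel, abs_of_pos (by positivity)]

/-- The diagonal terms are `|0|⁻¹ = 0`. -/
lemma sum_range_sum_range_inv_abs_sub (n : ℕ) :
    ∑ i ∈ range n, ∑ j ∈ range n, |(j : ℝ) - i|⁻¹ = 2 * (n * harmonic n - n) := by
  have hsum : ∑ i ∈ range n, ∑ j ∈ range n, |(j : ℝ) - i|⁻¹ =
      2 * ∑ i ∈ range n, (harmonic i : ℝ) := by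
    induction n with
    | zero => simp
    | succ n ih =>
      simp only [sum_range_succ, sum_add_distrib, ih, sub_self, abs_zero, inv_zero, add_zero]
      have hcomm : ∀ j : ℕ, |(j : ℝ) - n|⁻¹ = |(n : ℝ) - j|⁻¹ := fun j => by rw [abs_sub_comm]
      simp only [hcomm, sum_range_inv_abs_sub]
      ring
  rw [hsum]
  exact_mod_cast congrArg (fun q : ℚ => 2 * (q : ℝ)) (sum_range_harmonic n)

lemma sum_fin_sum_fin_inv_abs_sub (n : ℕ) :
    ∑ i : Fin n, ∑ j : Fin n, |((j : ℕ) : ℝ) - (i : ℕ)|⁻¹ = 2 * (n * harmonic n - n) := by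
  rw [← sum_range_sum_range_inv_abs_sub, ← Fin.sum_univ_eq_sum_range]
  exact sum_congr rfl fun i _ => Fin.sum_univ_eq_sum_range (fun j => |(j : ℝ) - i|⁻¹) n

lemma integral_two_pi_sub_mul_sum_sum_cos_mul_sub_sin_mul {n : ℕ} (a b : Fin n → Fin n → ℝ) :
    ∫ θ in (0 : ℝ)..2 * π, ∑ i : Fin n, ∑ j : Fin n, (2 * π - θ) *
        (cos ((((j : ℕ) : ℝ) - (i : ℕ)) * θ) * a i j -
          sin ((((j : ℕ) : ℝ) - (i : ℕ)) * θ) * b i j) =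
      2 * π ^ 2 * ∑ i, a i i - 2 * π * ∑ i, ∑ j, b i j / (((j : ℕ) : ℝ) - (i : ℕ)) := by
  have hcast : ∀ i j : Fin n, ((j : ℕ) : ℝ) - (i : ℕ) = (((j : ℕ) - (i : ℕ) : ℤ) : ℝ) :=
    fun i j => by push_cast; rfl
  have hdiag : ∀ i j : Fin n, ((j : ℕ) - (i : ℕ) : ℤ) = 0 ↔ i = j := fun i j => by
    simp [sub_eq_zero, Fin.val_inj, eq_comm]
  rw [integral_finsetSum fun i _ => Continuous.intervalIntegrable (by fun_prop) _ _,
    sum_congr rfl fun i _ =>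
      integral_finsetSum fun j _ => Continuous.intervalIntegrable (by fun_prop) _ _]
  simp only [hcast, integral_two_pi_sub_mul_cos_mul_sub_sin_mul, sum_sub_distrib, hdiag,
    ite_mul, zero_mul, sum_ite_eq, mem_univ, if_true, mul_sum]
  congr 1
  exact sum_congr rfl fun i _ => sum_congr rfl fun j _ => by ring

section InnerProductSpace

variable {H : Type*} [NormedAddCommGroup H] [InnerProductSpace ℝ H]

/-- The real form of `‖∑ⱼ e^{i t_j} (x_j + i y_j)‖²` in the complexification of `H`. -/
lemma norm_sq_add_norm_sq_sum_rotate {ι : Type*} [Fintype ι] (x y : ι → H) (t : ι → ℝ) :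
    ‖∑ j, (cos (t j) • x j - sin (t j) • y j)‖ ^ 2
        + ‖∑ j, (sin (t j) • x j + cos (t j) • y j)‖ ^ 2 =
      ∑ i, ∑ j, (cos (t j - t i) * (⟪x i, x j⟫ + ⟪y i, y j⟫)
        - sin (t j - t i) * (⟪x i, y j⟫ - ⟪x j, y i⟫)) := by
  rw [← real_inner_self_eq_norm_sq, ← real_inner_self_eq_norm_sq, inner_sum, inner_sum]
  simp_rw [sum_inner, ← sum_add_distrib]
  refine sum_congr rfl fun i _ => sum_congr rfl fun j _ => ?_
  rw [cos_sub, sin_sub]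
  simp only [inner_sub_left, inner_sub_right, inner_add_left, inner_add_right,
    real_inner_smul_left, real_inner_smul_right]
  rw [real_inner_comm (x j) (x i), real_inner_comm (y j) (y i), real_inner_comm (y j) (x i),
    real_inner_comm (y i) (x j)]
  ring

/-- The diagonal terms on the left are `0 / 0 = 0`. -/
theorem sum_sum_inner_sub_inner_div_le {n : ℕ} (x y : Fin n → H) :
    ∑ i, ∑ j, (⟪x i, y j⟫ - ⟪x j, y i⟫) / (((j : ℕ) : ℝ) - (i : ℕ)) ≤
      π * ∑ i, (‖x i‖ ^ 2 + ‖y i‖ ^ 2) := by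
  have hnonneg : ∀ θ ∈ Set.Icc 0 (2 * π), 0 ≤ ∑ i : Fin n, ∑ j : Fin n, (2 * π - θ) *
      (cos ((((j : ℕ) : ℝ) - (i : ℕ)) * θ) * (⟪x i, x j⟫ + ⟪y i, y j⟫) -
        sin ((((j : ℕ) : ℝ) - (i : ℕ)) * θ) * (⟪x i, y j⟫ - ⟪x j, y i⟫)) := by
    intro θ hθ
    have hrot := norm_sq_add_norm_sq_sum_rotate x y (fun j => ((j : ℕ) : ℝ) * θ)
    simp_rw [← sub_mul] at hrot
    have : 0 ≤ 2 * π - θ := by linarith [hθ.2]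
    simp only [← mul_sum, ← hrot]
    positivity
  have hI := integral_nonneg (μ := MeasureTheory.volume) (by positivity) hnonneg
  rw [integral_two_pi_sub_mul_sum_sum_cos_mul_sub_sin_mul] at hI
  simp only [real_inner_self_eq_norm_sq] at hI
  nlinarith [pi_pos]

lemma mul_inv_abs_sub_le_inner_sub_inner_div {n : ℕ} {ε : ℝ} {x y : Fin n → H}
    (hhg : ∀ i j : Fin n, i < j → ε ≤ ⟪x i, y j⟫ - ⟪x j, y i⟫) (i j : Fin n) :
    ε * |((j : ℕ) : ℝ) - (i : ℕ)|⁻¹ ≤ (⟪x i, y j⟫ - ⟪x j, y i⟫) / (((j : ℕ) : ℝ) - (i : ℕ)) := by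
  rcases lt_trichotomy i j with hij | rfl | hji
  · have hd : (0 : ℝ) < ((j : ℕ) : ℝ) - (i : ℕ) := sub_pos.2 (by exact_mod_cast hij)
    rw [abs_of_pos hd, div_eq_mul_inv]
    exact mul_le_mul_of_nonneg_right (hhg i j hij) (inv_nonneg.2 hd.le)
  · simp
  · have hd : ((j : ℕ) : ℝ) - (i : ℕ) < 0 := sub_neg.2 (by exact_mod_cast hji)
    rw [abs_of_neg hd, ← neg_div_neg_eq, div_eq_mul_inv, neg_sub, neg_sub]
    exact mul_le_mul_of_nonneg_right (hhg j i hji) (inv_nonneg.2 (by linarith))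

end InnerProductSpace

theorem inner_product_stability_upper_bound_general
    {H : Type*} [NormedAddCommGroup H] [InnerProductSpace ℝ H]
    (ε : ℝ) (hε : ε ∈ Set.Ioo (0 : ℝ) 1) (n : ℕ)
    (x y : Fin n → H)
    (hx : ∀ i, ‖x i‖ ≤ 1) (hy : ∀ i, ‖y i‖ ≤ 1)
    (hhg : ∀ i j : Fin n, i < j → ε ≤ ⟪x i, y j⟫ - ⟪x j, y i⟫) :
    Real.log n ≤ π / ε + 1 := by
  obtain ⟨hε, -⟩ := hε
  rcases n.eq_zero_or_pos with rfl | hn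
  · simp only [CharP.cast_eq_zero, log_zero]
    positivity
  have hnorms : ∑ i, (‖x i‖ ^ 2 + ‖y i‖ ^ 2) ≤ 2 * n := by
    calc ∑ i, (‖x i‖ ^ 2 + ‖y i‖ ^ 2) ≤ ∑ _i : Fin n, (2 : ℝ) :=
          sum_le_sum fun i _ => by nlinarith [hx i, hy i, norm_nonneg (x i), norm_nonneg (y i)]
      _ = 2 * n := by simp [mul_comm]
  have hpairs : ε * (2 * (n * harmonic n - n)) ≤
      ∑ i, ∑ j, (⟪x i, y j⟫ - ⟪x j, y i⟫) / (((j : ℕ) : ℝ) - (i : ℕ)) := by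
    rw [← sum_fin_sum_fin_inv_abs_sub, mul_sum]
    refine sum_le_sum fun i _ => ?_
    rw [mul_sum]
    exact sum_le_sum fun j _ => mul_inv_abs_sub_le_inner_sub_inner_div hhg i j
  have hharmonic : (harmonic n : ℝ) ≤ π / ε + 1 := by
    have := hpairs.trans ((sum_sum_inner_sub_inner_div_le x y).trans
      (mul_le_mul_of_nonneg_left hnorms pi_pos.le))
    rw [← sub_le_iff_le_add, le_div_iff₀ hε]
    have hscaled : (2 * n) * ((harmonic n - 1) * ε) ≤ (2 * n) * π := by linarith
    exact le_of_mul_le_mul_left hscaled (mul_pos two_pos (Nat.cast_pos.2 hn))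
  calc log n ≤ log ((n + 1 : ℕ) : ℝ) := log_le_log (by exact_mod_cast hn) (by simp)
    _ ≤ harmonic n := log_add_one_le_harmonic n
    _ ≤ π / ε + 1 := hharmonic

/-- Quantitative stability of the Hilbert inner product (upper bound). -/
theorem inner_product_stability_upper_bound
    {H : Type*} [NormedAddCommGroup H] [InnerProductSpace ℝ H]
    (ε : ℝ) (hε : ε ∈ Set.Ioo (0 : ℝ) 1) (n : ℕ) (hn : 2 ≤ n)
    (x y : Fin n → H)
    (hx : ∀ i, ‖x i‖ ≤ 1) (hy : ∀ i, ‖y i‖ ≤ 1)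
    (hhg : ∀ i j : Fin n, i < j → ε ≤ ⟪x i, y j⟫ - ⟪x j, y i⟫) :
    Real.log n ≤ π / ε + 1 :=
  inner_product_stability_upper_bound_general ε hε n x y hx hy hhg
end

section
/- Half-graph witness construction: For every positive integer m, set N = 2^(m+1) − 2 and k = 2^m. There exist vectors x_1,…,x_k and y_1,…,y_k in the Euclidean space ℝ^N such that ‖x_i‖ = 1 and ‖y_i‖ ≤ 1 for all i, and for all 1 ≤ i < j ≤ k one has ⟪x_i, y_j⟫ = 1/m and ⟪x_j, y_i⟫ = 0; in particular ⟪x_i, y_j⟫ − ⟪x_j, y_i⟫ = 1/m for all i < j. -/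
/-!
Identify the strings of length `m` with the leaves of the complete binary tree of depth `m`. The
unnormalised `x_s` is the indicator of the path to `s`, and `y_s` that of the left siblings of
the right turns of this path. Then `⟪x_s, y_t⟫` counts the nodes where the paths to `s` and `t`
part with `s` going left and `t` going right: there is one if `s < t` and none if `s > t`, while
`‖x_s‖² = m` and `‖y_s‖² ≤ m`; scaling by `1 / √m` finishes. The tree of depth `m + 1` consists
of two root edges above two copies of the tree of depth `m`, so the vectors are built by
recursion on `m`.
-/

open RealInnerProductSpace

structure IsHalfGraphPair {ι F : Type*} [LT ι] [Norm F] [Inner ℝ F] (r c : ℝ) (u v : ι → F) :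
    Prop where
  norm_sq_left : ∀ i, ‖u i‖ ^ 2 = r
  norm_sq_right_le : ∀ i, ‖v i‖ ^ 2 ≤ r
  inner_of_lt : ∀ i j, i < j → ⟪u i, v j⟫ = c
  inner_of_gt : ∀ i j, i < j → ⟪u j, v i⟫ = 0

namespace IsHalfGraphPair

variable {ι κ F G : Type*} [SeminormedAddCommGroup F] [InnerProductSpace ℝ F]
  [SeminormedAddCommGroup G] [InnerProductSpace ℝ G] {r c : ℝ}

section Preorder

variable [Preorder ι] [Preorder κ] {u v : ι → F}

theorem of_subsingleton [Subsingleton ι] : IsHalfGraphPair 0 c (0 : ι → F) 0 where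
  norm_sq_left _ := by simp
  norm_sq_right_le _ := by simp
  inner_of_lt i j h := absurd h (Subsingleton.elim i j ▸ lt_irrefl i)
  inner_of_gt i j h := absurd h (Subsingleton.elim i j ▸ lt_irrefl i)

theorem comp (h : IsHalfGraphPair r c u v) {f : κ → ι} (hf : StrictMono f) :
    IsHalfGraphPair r c (u ∘ f) (v ∘ f) where
  norm_sq_left i := h.norm_sq_left (f i)
  norm_sq_right_le i := h.norm_sq_right_le (f i)
  inner_of_lt _ _ hij := h.inner_of_lt _ _ (hf hij)
  inner_of_gt _ _ hij := h.inner_of_gt _ _ (hf hij)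

end Preorder

variable [LT ι] {u v : ι → F}

theorem map (h : IsHalfGraphPair r c u v) (L : F →ₗᵢ[ℝ] G) :
    IsHalfGraphPair r c (L ∘ u) (L ∘ v) where
  norm_sq_left i := by simpa using h.norm_sq_left i
  norm_sq_right_le i := by simpa using h.norm_sq_right_le i
  inner_of_lt i j hij := (L.inner_map_map _ _).trans (h.inner_of_lt i j hij)
  inner_of_gt i j hij := (L.inner_map_map _ _).trans (h.inner_of_gt i j hij)

theorem smul (h : IsHalfGraphPair r c u v) (a : ℝ) :
    IsHalfGraphPair (a ^ 2 * r) (a ^ 2 * c) (a • u) (a • v) where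
  norm_sq_left i := by
    rw [Pi.smul_apply, norm_smul, mul_pow, Real.norm_eq_abs, sq_abs, h.norm_sq_left]
  norm_sq_right_le i := by
    rw [Pi.smul_apply, norm_smul, mul_pow, Real.norm_eq_abs, sq_abs]
    exact mul_le_mul_of_nonneg_left (h.norm_sq_right_le i) (sq_nonneg a)
  inner_of_lt i j hij := by
    simp only [Pi.smul_apply, real_inner_smul_left, real_inner_smul_right, h.inner_of_lt i j hij]
    ring
  inner_of_gt i j hij := by
    simp [real_inner_smul_left, real_inner_smul_right, h.inner_of_gt i j hij]

end IsHalfGraphPair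

section Graft

variable {E : Type*} [Fintype E]

/-- `Fin 2 ⊕ Fin 2 × E` are the edges of a binary tree whose two subtrees at the root have edge
set `E`: put `a` on the two root edges and `w` on the edges of subtree `b`. -/
def graft (a : Fin 2 → ℝ) (b : Fin 2) (w : EuclideanSpace ℝ E) :
    EuclideanSpace ℝ (Fin 2 ⊕ Fin 2 × E) :=
  WithLp.toLp 2 (Sum.elim a fun q => if q.1 = b then w q.2 else 0)

theorem inner_graft (a a' : Fin 2 → ℝ) (b b' : Fin 2) (w w' : EuclideanSpace ℝ E) :
    ⟪graft a b w, graft a' b' w'⟫ = a' ⬝ᵥ a + if b = b' then ⟪w, w'⟫ else 0 := by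
  have hsub : ∑ q : Fin 2 × E, (if q.1 = b' then w' q.2 else 0) * (if q.1 = b then w q.2 else 0) =
      if b = b' then ⟪w, w'⟫ else 0 := by
    rw [Fintype.sum_prod_type]
    split_ifs with hb
    · subst hb
      simp [ite_mul, mul_ite, EuclideanSpace.inner_eq_star_dotProduct, dotProduct]
    · refine Finset.sum_eq_zero fun _ _ => Finset.sum_eq_zero fun _ _ => ?_
      split_ifs <;> simp_all
  simp only [graft, EuclideanSpace.inner_toLp_toLp, dotProduct, Fintype.sum_sum_type,
    Sum.elim_inl, Sum.elim_inr, star_trivial, hsub]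

variable {k : ℕ} {r : ℝ} {u v : Fin k → EuclideanSpace ℝ E}

/-- The terms across the two halves come from the left root edge alone, which lies on the paths of
the left half and is the left sibling of the right turn at the root for the right half; hence the
value `1`. -/
theorem IsHalfGraphPair.append (h : IsHalfGraphPair r 1 u v) :
    IsHalfGraphPair (r + 1) 1
      (Fin.append (fun s => graft (Pi.single 0 1) 0 (u s)) fun s => graft (Pi.single 1 1) 1 (u s))
      (Fin.append (fun s => graft 0 0 (v s)) fun s => graft (Pi.single 0 1) 1 (v s)) where
  norm_sq_left i := by
    induction i using Fin.addCases <;>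
      simp only [Fin.append_left, Fin.append_right, ← real_inner_self_eq_norm_sq, inner_graft] <;>
      simp [h.norm_sq_left, add_comm]
  norm_sq_right_le i := by
    induction i using Fin.addCases <;>
      simp only [Fin.append_left, Fin.append_right, ← real_inner_self_eq_norm_sq, inner_graft] <;>
      simp <;> linarith [h.norm_sq_right_le ‹_›]
  inner_of_lt i j hij := by
    induction i using Fin.addCases <;> induction j using Fin.addCases <;>
      simp only [Fin.append_left, Fin.append_right, inner_graft, Fin.lt_def, Fin.val_castAdd,
        Fin.val_natAdd] at hij ⊢ <;> simp <;>
      first | omega | exact h.inner_of_lt _ _ (Fin.lt_def.2 (by omega))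
  inner_of_gt i j hij := by
    induction i using Fin.addCases <;> induction j using Fin.addCases <;>
      simp only [Fin.append_left, Fin.append_right, inner_graft, Fin.lt_def, Fin.val_castAdd,
        Fin.val_natAdd] at hij ⊢ <;> simp <;>
      first | omega | exact h.inner_of_gt _ _ (Fin.lt_def.2 (by omega))

end Graft

theorem exists_isHalfGraphPair (m : ℕ) :
    ∃ (E : Type) (_ : Fintype E), Fintype.card E = 2 ^ (m + 1) - 2 ∧
      ∃ u v : Fin (2 ^ m) → EuclideanSpace ℝ E, IsHalfGraphPair m 1 u v := by
  induction m with
  | zero => exact ⟨Empty, inferInstance, rfl, 0, 0, by simpa using IsHalfGraphPair.of_subsingleton⟩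
  | succ m ih =>
    obtain ⟨E, _, hE, u, v, h⟩ := ih
    refine ⟨Fin 2 ⊕ Fin 2 × E, inferInstance, ?_, _, _,
      by simpa using h.append.comp (Fin.cast_strictMono (by rw [pow_succ, mul_two]))⟩
    simp only [Fintype.card_sum, Fintype.card_prod, Fintype.card_fin, hE]
    have : 2 ≤ 2 ^ (m + 1) := Nat.le_self_pow (by omega) 2
    rw [pow_succ 2 (m + 1)]
    omega

/-- Half-graph witness construction in Euclidean space of dimension `2^(m+1) - 2`. -/
theorem halfgraph_witness_construction (m : ℕ) (hm : 0 < m) :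
    ∃ x y : Fin (2 ^ m) → EuclideanSpace ℝ (Fin (2 ^ (m + 1) - 2)),
      (∀ i, ‖x i‖ = 1) ∧ (∀ i, ‖y i‖ ≤ 1) ∧
      ∀ i j : Fin (2 ^ m), i < j →
        ⟪x i, y j⟫ = 1 / (m : ℝ) ∧ ⟪x j, y i⟫ = 0 := by
  obtain ⟨E, _, hE, u, v, h⟩ := exists_isHalfGraphPair m
  let L := LinearIsometryEquiv.piLpCongrLeft 2 ℝ ℝ (Fintype.equivFinOfCardEq hE)
  have hscale : (√m)⁻¹ ^ 2 = 1 / (m : ℝ) := by simp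
  have hxy := (h.map L.toLinearIsometry).smul (√m)⁻¹
  rw [hscale, mul_one, one_div_mul_cancel (Nat.cast_ne_zero.2 hm.ne')] at hxy
  refine ⟨_, _, fun i => ?_, fun i => ?_,
    fun i j hij => ⟨hxy.inner_of_lt i j hij, hxy.inner_of_gt i j hij⟩⟩
  · exact (pow_eq_one_iff_of_nonneg (norm_nonneg _) two_ne_zero).1 (hxy.norm_sq_left i)
  · exact (sq_le_one_iff₀ (norm_nonneg _)).1 (hxy.norm_sq_right_le i)
end

section
/- Discrete Hilbert transform bound (Hilbert's inequality): Fix an integer n ≥ 2 and let u_1,…,u_n ∈ ℂ. Then |∑_{1 ≤ i ≠ j ≤ n} u_i · conj(u_j)/(i − j)| ≤ π · ∑_{i=1}^n |u_i|². Equivalently, the n × n matrix A with zero diagonal and entries a_{ij} = 1/(i − j) for i ≠ j, viewed as a linear operator on ℂ^n with the ℓ² norm, has operator norm at most π. -/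
/-!
With `P x = ∑ᵢ uᵢ e^{i νᵢ x}` for distinct integer frequencies `νᵢ`, the sawtooth `π - x` on
`[0, 2π]` has Fourier coefficients `2πi / m` for `m ≠ 0` and `0` for `m = 0`, so
`∫₀^{2π} (π - x) |P x|² dx = 2πi ∑_{i ≠ j} uᵢ conj uⱼ / (νᵢ - νⱼ)`.
Since `|π - x| ≤ π` there, this is at most `π ∫₀^{2π} |P|² = 2π² ∑ |uᵢ|²` by Parseval.
-/

open Real Complex ComplexConjugate intervalIntegral

namespace HilbertInequality

lemma exp_int_mul_I_mul_two_pi (m : ℤ) : Complex.exp (m * I * (2 * π)) = 1 := by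
  rw [show (m : ℂ) * I * (2 * π) = m * (2 * π * I) by ring, exp_int_mul_two_pi_mul_I]

lemma integral_exp_int_mul_I (m : ℤ) :
    ∫ x in (0 : ℝ)..2 * π, Complex.exp (m * I * x) = if m = 0 then (2 * π : ℂ) else 0 := by
  split_ifs with hm
  · simp [hm]
  have hc : (m : ℂ) * I ≠ 0 := by simp [hm]
  rw [integral_exp_mul_complex hc]
  push_cast
  simp [exp_int_mul_I_mul_two_pi]

lemma integral_pi_sub_mul_exp_of_exp_eq_one {c : ℂ} (hc : c ≠ 0)
    (hper : Complex.exp (c * (2 * π)) = 1) :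
    ∫ x in (0 : ℝ)..2 * π, (π - x : ℂ) * Complex.exp (c * x) = -2 * π / c := by
  have hderiv (x : ℝ) : HasDerivAt (fun y : ℝ => ((π - y) / c + 1 / c ^ 2) * Complex.exp (c * y))
      ((π - x) * Complex.exp (c * x)) x := by
    have h1 : HasDerivAt (fun y : ℝ => (π - y : ℂ) / c + 1 / c ^ 2) (-1 / c) x := by
      simpa using (((hasDerivAt_id (x : ℂ)).const_sub (π : ℂ)).div_const c).comp_ofReal.add_const
        (1 / c ^ 2)
    have h2 : HasDerivAt (fun y : ℝ => Complex.exp (c * y)) (c * Complex.exp (c * x)) x := by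
      simpa [mul_comm] using ((hasDerivAt_id (x : ℂ)).const_mul c).comp_ofReal.cexp
    refine (h1.fun_mul h2).congr_deriv ?_
    field_simp
    ring
  rw [integral_eq_sub_of_hasDerivAt (fun x _ => hderiv x)
    ((by fun_prop : Continuous _).intervalIntegrable _ _)]
  push_cast
  rw [hper, mul_zero, Complex.exp_zero]
  field_simp
  ring

/-- For `m = 0` both sides vanish: the left since `π - x` has mean zero, the right since
`x / 0 = 0`. -/
lemma integral_pi_sub_mul_exp_int_mul_I (m : ℤ) :
    ∫ x in (0 : ℝ)..2 * π, (π - x : ℂ) * Complex.exp (m * I * x) = 2 * π * I / m := by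
  rcases eq_or_ne m 0 with rfl | hm
  · simp only [Int.cast_zero, zero_mul, Complex.exp_zero, mul_one, div_zero, ← ofReal_sub,
      intervalIntegral.integral_ofReal, ofReal_eq_zero]
    rw [integral_sub intervalIntegrable_const intervalIntegrable_id, integral_const, integral_id]
    simp
    ring
  have hc : (m : ℂ) * I ≠ 0 := by simp [hm]
  rw [integral_pi_sub_mul_exp_of_exp_eq_one hc (exp_int_mul_I_mul_two_pi m)]
  field_simp
  rw [I_sq]

lemma norm_integral_pi_sub_mul_le {g : ℝ → ℂ} (hg : Continuous g) :
    ‖∫ x in (0 : ℝ)..2 * π, (π - x : ℂ) * g x‖ ≤ π * ∫ x in (0 : ℝ)..2 * π, ‖g x‖ := by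
  rw [← integral_const_mul]
  refine norm_integral_le_of_norm_le (by positivity) (Filter.Eventually.of_forall fun x hx => ?_)
    ((hg.norm.const_mul π).intervalIntegrable _ _)
  have hpi : |π - x| ≤ π := abs_le.2 ⟨by linarith [hx.2], by linarith [hx.1]⟩
  rw [norm_mul, ← ofReal_sub, norm_real, Real.norm_eq_abs]
  exact mul_le_mul_of_nonneg_right hpi (norm_nonneg _)

variable {ι : Type*} [Fintype ι] (ν : ι → ℤ) (u : ι → ℂ)

noncomputable def trigPoly (x : ℝ) : ℂ :=
  ∑ i, u i * Complex.exp (ν i * I * x)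

@[fun_prop]
lemma continuous_trigPoly : Continuous (trigPoly ν u) := by
  unfold trigPoly
  fun_prop

lemma trigPoly_mul_conj (x : ℝ) :
    trigPoly ν u x * conj (trigPoly ν u x)
      = ∑ i, ∑ j, u i * conj (u j) * Complex.exp ((ν i - ν j : ℤ) * I * x) := by
  simp only [trigPoly, map_sum, Finset.sum_mul_sum, map_mul, ← Complex.exp_conj, conj_I,
    conj_ofReal, map_intCast]
  refine Fintype.sum_congr _ _ fun i => Fintype.sum_congr _ _ fun j => ?_
  rw [mul_mul_mul_comm, ← Complex.exp_add]
  push_cast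
  ring_nf

lemma integral_mul_trigPoly_mul_conj {w : ℝ → ℂ} (hw : Continuous w) :
    ∫ x in (0 : ℝ)..2 * π, w x * (trigPoly ν u x * conj (trigPoly ν u x))
      = ∑ i, ∑ j, u i * conj (u j) *
          ∫ x in (0 : ℝ)..2 * π, w x * Complex.exp ((ν i - ν j : ℤ) * I * x) := by
  simp_rw [trigPoly_mul_conj, Finset.mul_sum]
  rw [integral_finsetSum fun i _ => (by fun_prop : Continuous _).intervalIntegrable _ _]
  refine Fintype.sum_congr _ _ fun i => ?_
  rw [integral_finsetSum fun j _ => (by fun_prop : Continuous _).intervalIntegrable _ _]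
  refine Fintype.sum_congr _ _ fun j => ?_
  rw [← integral_const_mul]
  congr 1 with x
  ring

lemma integral_norm_trigPoly_sq (hν : Function.Injective ν) :
    ∫ x in (0 : ℝ)..2 * π, ‖trigPoly ν u x‖ ^ 2 = 2 * π * ∑ i, ‖u i‖ ^ 2 := by
  classical
  apply ofReal_injective
  have h := integral_mul_trigPoly_mul_conj ν u (w := fun _ => 1) continuous_const
  simp only [one_mul, mul_conj, integral_exp_int_mul_I, mul_ite, mul_zero, sub_eq_zero,
    hν.eq_iff, Finset.sum_ite_eq, Finset.mem_univ, if_true] at h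
  rw [← intervalIntegral.integral_ofReal]
  push_cast [← normSq_eq_norm_sq, h, Finset.mul_sum]
  refine Fintype.sum_congr _ _ fun i => ?_
  ring

lemma integral_pi_sub_mul_trigPoly_mul_conj :
    ∫ x in (0 : ℝ)..2 * π, (π - x : ℂ) * (trigPoly ν u x * conj (trigPoly ν u x))
      = 2 * π * I * ∑ i, ∑ j, u i * conj (u j) / (ν i - ν j) := by
  rw [integral_mul_trigPoly_mul_conj ν u (by fun_prop)]
  simp only [integral_pi_sub_mul_exp_int_mul_I, Finset.mul_sum]
  refine Fintype.sum_congr _ _ fun i => Fintype.sum_congr _ _ fun j => ?_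
  push_cast
  ring

/-- The diagonal terms vanish because `x / 0 = 0`. -/
theorem norm_sum_mul_conj_div_sub_le (hν : Function.Injective ν) :
    ‖∑ i, ∑ j, u i * conj (u j) / (ν i - ν j)‖ ≤ π * ∑ i, ‖u i‖ ^ 2 := by
  have h := norm_integral_pi_sub_mul_le
    (g := fun x => trigPoly ν u x * conj (trigPoly ν u x)) (by fun_prop)
  simp only [integral_pi_sub_mul_trigPoly_mul_conj, norm_mul, norm_conj,
    ← sq, integral_norm_trigPoly_sq ν u hν, norm_I, Complex.norm_two, norm_real, Real.norm_eq_abs,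
    abs_of_pos pi_pos] at h
  nlinarith [pi_pos]

end HilbertInequality

open HilbertInequality

theorem discrete_hilbert_transform_bound_general (n : ℕ) (u : Fin n → ℂ) :
    ‖∑ i : Fin n, ∑ j : Fin n,
        if i ≠ j then u i * (starRingEnd ℂ) (u j) / (((i : ℕ) : ℂ) - ((j : ℕ) : ℂ)) else 0‖
      ≤ π * ∑ i : Fin n, ‖u i‖ ^ 2 := by
  convert norm_sum_mul_conj_div_sub_le (fun i : Fin n => (i : ℤ)) u
    (Nat.cast_injective.comp Fin.val_injective) using 5 with i _ j
  split_ifs with h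
  · push_cast; rfl
  · obtain rfl := not_not.1 h
    simp

/-- Discrete Hilbert transform bound (Hilbert's inequality). -/
theorem discrete_hilbert_transform_bound (n : ℕ) (hn : 2 ≤ n) (u : Fin n → ℂ) :
    ‖∑ i : Fin n, ∑ j : Fin n,
        if i ≠ j then u i * (starRingEnd ℂ) (u j) / (((i : ℕ) : ℂ) - ((j : ℕ) : ℂ)) else 0‖
      ≤ π * ∑ i : Fin n, ‖u i‖ ^ 2 :=
  discrete_hilbert_transform_bound_general n u
end

section
/- Lower bound for fractional power connectives: Fix β ∈ (0,1] and a positive integer m. There exist a finite-dimensional real inner product space H and vectors x_1,…,x_{2^m}, y_1,…,y_{2^m} in the closed unit ball of H such that for all 1 ≤ i < j ≤ 2^m, (max(⟪x_i,y_j⟫,0))^β − (max(⟪x_j,y_i⟫,0))^β ≥ m^(−β). In particular, the predicate f_β(x,y) = (max(⟪x,y⟫,0))^β on the unit ball is not (2^m, m^(−β))-stable. -/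
open RealInnerProductSpace

private lemma frac_cond_iff (a b k : ℕ) :
    (a / 2^k = 2*(b / 2^(k+1)) + (1 - (b/2^k)%2)) ↔
      (a/2^(k+1) = b/2^(k+1) ∧ (a/2^k)%2 + (b/2^k)%2 = 1) := by
  have h1 : a / 2^(k+1) = (a/2^k)/2 := by rw [pow_succ, Nat.div_div_eq_div_mul]
  have h2 : b / 2^(k+1) = (b/2^k)/2 := by rw [pow_succ, Nat.div_div_eq_div_mul]
  omega

private lemma frac_key (m a b : ℕ) (ha : a < 2^m) (hb : b < 2^m) (hab : a ≠ b) :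
    ∃ K < m, a/2^(K+1) = b/2^(K+1) ∧ a/2^K ≠ b/2^K ∧
      (a < b ↔ ((a/2^K)%2 = 0 ∧ (b/2^K)%2 = 1)) ∧
      ∀ k, a/2^(k+1) = b/2^(k+1) → a/2^k ≠ b/2^k → k = K := by
  have hex : ∃ k, a / 2^k = b / 2^k :=
    ⟨m, by rw [Nat.div_eq_of_lt ha, Nat.div_eq_of_lt hb]⟩
  have hspec : a / 2^(Nat.find hex) = b / 2^(Nat.find hex) := Nat.find_spec hex
  have hT0 : Nat.find hex ≠ 0 := by
    intro h; rw [h] at hspec; simp at hspec; exact hab hspec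
  obtain ⟨K, hK⟩ : ∃ K, Nat.find hex = K + 1 := ⟨Nat.find hex - 1, by omega⟩
  rw [hK] at hspec
  have hne : a / 2^K ≠ b / 2^K := Nat.find_min hex (by omega)
  have hKm : K < m := by
    by_contra h
    push_neg at h
    have h2 : 2^m ≤ 2^K := Nat.pow_le_pow_right (by norm_num) h
    rw [Nat.div_eq_of_lt (lt_of_lt_of_le ha h2), Nat.div_eq_of_lt (lt_of_lt_of_le hb h2)] at hne
    exact hne rfl
  have heq : ∀ k, K + 1 ≤ k → a / 2^k = b / 2^k := by
    intro k hk
    have h1 : a / 2^k = a / 2^(K+1) / 2^(k-(K+1)) := by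
      rw [Nat.div_div_eq_div_mul, ← pow_add]; congr 2; omega
    have h2 : b / 2^k = b / 2^(K+1) / 2^(k-(K+1)) := by
      rw [Nat.div_div_eq_div_mul, ← pow_add]; congr 2; omega
    rw [h1, h2, hspec]
  refine ⟨K, hKm, hspec, hne, ?_, ?_⟩
  · have h1 : a / 2^(K+1) = (a/2^K)/2 := by rw [pow_succ, Nat.div_div_eq_div_mul]
    have h2 : b / 2^(K+1) = (b/2^K)/2 := by rw [pow_succ, Nat.div_div_eq_div_mul]
    have mono1 : a ≤ b → a / 2^K ≤ b / 2^K := fun h => Nat.div_le_div_right h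
    have mono2 : b ≤ a → b / 2^K ≤ a / 2^K := fun h => Nat.div_le_div_right h
    omega
  · intro k hk1 hk2
    have hge : K + 1 ≤ k + 1 := hK ▸ Nat.find_min' hex hk1
    have hlt : ¬ (K + 1 ≤ k) := fun h => hk2 (heq k h)
    omega

private lemma frac_sum_diag (m a : ℕ) :
    (∑ k ∈ Finset.range m,
      (if a / 2^k = 2*(a / 2^(k+1)) + (1 - (a/2^k)%2) then
        (1 - 2*(((a / 2^k) % 2 : ℕ)) : ℝ) else 0)) = 0 := by
  apply Finset.sum_eq_zero
  intro k _
  rw [if_neg]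
  rw [frac_cond_iff]
  omega

private lemma frac_sum_lt (m a b : ℕ) (ha : a < 2^m) (hb : b < 2^m) (hab : a < b) :
    (∑ k ∈ Finset.range m,
      (if a / 2^k = 2*(b / 2^(k+1)) + (1 - (b/2^k)%2) then
        (1 - 2*(((a / 2^k) % 2 : ℕ)) : ℝ) else 0)) = 1 := by
  obtain ⟨K, hKm, hhigh, hne, hcrit, huniq⟩ := frac_key m a b ha hb (Nat.ne_of_lt hab)
  obtain ⟨hbit0, hbit1⟩ := hcrit.1 hab
  rw [Finset.sum_eq_single_of_mem K (Finset.mem_range.2 hKm)]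
  · rw [if_pos (by rw [frac_cond_iff]; omega), hbit0]
    norm_num
  · intro k _ hk
    rw [if_neg]
    rw [frac_cond_iff]
    rintro ⟨hh, hs⟩
    have h1 : a / 2^(k+1) = (a/2^k)/2 := by rw [pow_succ, Nat.div_div_eq_div_mul]
    have h2 : b / 2^(k+1) = (b/2^k)/2 := by rw [pow_succ, Nat.div_div_eq_div_mul]
    exact hk (huniq k hh (by omega))

private lemma frac_sum_gt (m a b : ℕ) (ha : a < 2^m) (hb : b < 2^m) (hab : a < b) :
    (∑ k ∈ Finset.range m,
      (if b / 2^k = 2*(a / 2^(k+1)) + (1 - (a/2^k)%2) then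
        (1 - 2*(((b / 2^k) % 2 : ℕ)) : ℝ) else 0)) = -1 := by
  obtain ⟨K, hKm, hhigh, hne, hcrit, huniq⟩ := frac_key m a b ha hb (Nat.ne_of_lt hab)
  obtain ⟨hbit0, hbit1⟩ := hcrit.1 hab
  rw [Finset.sum_eq_single_of_mem K (Finset.mem_range.2 hKm)]
  · rw [if_pos (by rw [frac_cond_iff]; omega), hbit1]
    norm_num
  · intro k _ hk
    rw [if_neg]
    rw [frac_cond_iff]
    rintro ⟨hh, hs⟩
    have h1 : a / 2^(k+1) = (a/2^k)/2 := by rw [pow_succ, Nat.div_div_eq_div_mul]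
    have h2 : b / 2^(k+1) = (b/2^k)/2 := by rw [pow_succ, Nat.div_div_eq_div_mul]
    exact hk (huniq k hh.symm (by omega))

private lemma frac_inner {n L : ℕ} (c d : Fin n → ℝ) (f g : Fin n → Fin L) :
    ⟪∑ k : Fin n, c k • EuclideanSpace.single
        ((finProdFinEquiv : Fin n × Fin L ≃ Fin (n * L)) (k, f k)) (1:ℝ),
     ∑ k : Fin n, d k • EuclideanSpace.single (finProdFinEquiv (k, g k)) (1:ℝ)⟫
    = ∑ k : Fin n, (if f k = g k then c k * d k else 0) := by
  rw [sum_inner]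
  apply Finset.sum_congr rfl
  intro k _
  rw [real_inner_smul_left, inner_sum, Finset.sum_eq_single k]
  · rw [real_inner_smul_right, EuclideanSpace.inner_single_left, EuclideanSpace.single_apply]
    simp only [map_one, one_mul, EmbeddingLike.apply_eq_iff_eq, Prod.mk.injEq, true_and]
    by_cases h : f k = g k
    · rw [if_pos h, if_pos h]; ring
    · rw [if_neg h, if_neg h]; ring
  · intro l _ hlk
    rw [real_inner_smul_right, EuclideanSpace.inner_single_left, EuclideanSpace.single_apply,
      if_neg, mul_zero, mul_zero]
    intro hh
    rw [EmbeddingLike.apply_eq_iff_eq, Prod.mk.injEq] at hh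
    exact hlk hh.1.symm
  · intro h
    exact absurd (Finset.mem_univ k) h

/-- Lower bound for fractional power connectives `(⟪x,y⟫₊)^β`, `β ∈ (0,1]`. -/
theorem fractional_power_lower_bound (β : ℝ) (hβ : β ∈ Set.Ioc (0 : ℝ) 1)
    (m : ℕ) (hm : 0 < m) :
    ∃ (N : ℕ) (x y : Fin (2 ^ m) → EuclideanSpace ℝ (Fin N)),
      (∀ i, ‖x i‖ ≤ 1) ∧ (∀ i, ‖y i‖ ≤ 1) ∧
      ∀ i j : Fin (2 ^ m), i < j →
        (m : ℝ) ^ (-β) ≤ (max ⟪x i, y j⟫ 0) ^ β - (max ⟪x j, y i⟫ 0) ^ β := by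
  have hm' : (0:ℝ) < m := Nat.cast_pos.2 hm
  set sq : ℝ := Real.sqrt m with hsqdef
  have hsq : sq * sq = (m:ℝ) := Real.mul_self_sqrt (Nat.cast_nonneg m)
  have hsq0 : sq ≠ 0 := by
    intro h; rw [h, mul_zero] at hsq; exact (ne_of_gt hm') hsq.symm
  -- index functions
  have hfx : ∀ (a : Fin (2^m)) (k : Fin m), a.val / 2^(k:ℕ) < 2^m :=
    fun a k => lt_of_le_of_lt (Nat.div_le_self _ _) a.isLt
  have hfy : ∀ (b : Fin (2^m)) (k : Fin m),
      2*(b.val / 2^((k:ℕ)+1)) + (1 - (b.val/2^(k:ℕ))%2) < 2^m := by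
    intro b k
    have h1 : 2*(b.val / 2^((k:ℕ)+1)) ≤ b.val := by
      calc 2*(b.val / 2^((k:ℕ)+1)) ≤ 2^((k:ℕ)+1) * (b.val / 2^((k:ℕ)+1)) := by
            apply Nat.mul_le_mul_right
            have : (2:ℕ)^1 ≤ 2^((k:ℕ)+1) := Nat.pow_le_pow_right (by norm_num) (by omega)
            simpa using this
        _ ≤ b.val := Nat.mul_div_le _ _
    have h2 : (2:ℕ)^m = 2*2^(m-1) := by
      rw [← pow_succ']
      congr 1
      omega
    have hb := b.isLt
    omega
  set fx : Fin (2^m) → Fin m → Fin (2^m) := fun a k => ⟨a.val / 2^(k:ℕ), hfx a k⟩ with hfxdef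
  set fy : Fin (2^m) → Fin m → Fin (2^m) :=
    fun b k => ⟨2*(b.val / 2^((k:ℕ)+1)) + (1 - (b.val/2^(k:ℕ))%2), hfy b k⟩ with hfydef
  set cx : Fin (2^m) → Fin m → ℝ :=
    fun a k => (1 - 2*(((a.val / 2^(k:ℕ)) % 2 : ℕ)) : ℝ)/sq with hcxdef
  refine ⟨m * 2^m,
    fun a => ∑ k : Fin m, cx a k • EuclideanSpace.single (finProdFinEquiv (k, fx a k)) (1:ℝ),
    fun b => ∑ k : Fin m, (1/sq) • EuclideanSpace.single (finProdFinEquiv (k, fy b k)) (1:ℝ),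
    ?_, ?_, ?_⟩
  · -- norms of x
    intro a
    have hinner : ⟪(∑ k : Fin m, cx a k • EuclideanSpace.single (finProdFinEquiv (k, fx a k)) (1:ℝ)),
        (∑ k : Fin m, cx a k • EuclideanSpace.single (finProdFinEquiv (k, fx a k)) (1:ℝ))⟫ = 1 := by
      rw [frac_inner]
      have : ∀ k : Fin m, (if fx a k = fx a k then cx a k * cx a k else 0) = 1/(m:ℝ) := by
        intro k
        rw [if_pos rfl]
        have hc : cx a k = ((1:ℝ) - 2*(((a.val / 2^(k:ℕ)) % 2 : ℕ)))/sq := rfl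
        rw [hc]
        rcases Nat.mod_two_eq_zero_or_one (a.val / 2^(k:ℕ)) with h | h <;>
          · rw [h]
            push_cast
            field_simp
            linarith [hsq]
      rw [Finset.sum_congr rfl (fun k _ => this k)]
      rw [Finset.sum_const, Finset.card_univ, Fintype.card_fin, nsmul_eq_mul]
      field_simp
    have hnorm := real_inner_self_eq_norm_sq
      (∑ k : Fin m, cx a k • EuclideanSpace.single (finProdFinEquiv (k, fx a k)) (1:ℝ))
    rw [hinner] at hnorm
    nlinarith [norm_nonneg (∑ k : Fin m, cx a k • EuclideanSpace.single (finProdFinEquiv (k, fx a k)) (1:ℝ))]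
  · -- norms of y
    intro b
    have hinner : ⟪(∑ k : Fin m, (1/sq) • EuclideanSpace.single (finProdFinEquiv (k, fy b k)) (1:ℝ)),
        (∑ k : Fin m, (1/sq) • EuclideanSpace.single (finProdFinEquiv (k, fy b k)) (1:ℝ))⟫ = 1 := by
      rw [frac_inner (fun _ => 1/sq) (fun _ => 1/sq) (fy b) (fy b)]
      have : ∀ k : Fin m, (if fy b k = fy b k then (1/sq) * (1/sq) else 0) = 1/(m:ℝ) := by
        intro k
        rw [if_pos rfl]
        field_simp
        linarith [hsq]
      rw [Finset.sum_congr rfl (fun k _ => this k)]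
      rw [Finset.sum_const, Finset.card_univ, Fintype.card_fin, nsmul_eq_mul]
      field_simp
    have hnorm := real_inner_self_eq_norm_sq
      (∑ k : Fin m, (1/sq) • EuclideanSpace.single (finProdFinEquiv (k, fy b k)) (1:ℝ))
    rw [hinner] at hnorm
    nlinarith [norm_nonneg (∑ k : Fin m, (1/sq) • EuclideanSpace.single (finProdFinEquiv (k, fy b k)) (1:ℝ))]
  · -- main inequality
    intro i j hij
    have hij' : (i:ℕ) < (j:ℕ) := hij
    have hxy : ∀ a b : Fin (2^m),
        ⟪(∑ k : Fin m, cx a k • EuclideanSpace.single (finProdFinEquiv (k, fx a k)) (1:ℝ)),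
         (∑ k : Fin m, (1/sq) • EuclideanSpace.single (finProdFinEquiv (k, fy b k)) (1:ℝ))⟫
        = (∑ k ∈ Finset.range m,
            (if a.val / 2^k = 2*(b.val / 2^(k+1)) + (1 - (b.val/2^k)%2) then
              (1 - 2*(((a.val / 2^k) % 2 : ℕ)) : ℝ) else 0)) / m := by
      intro a b
      rw [frac_inner (cx a) (fun _ => 1/sq) (fx a) (fy b)]
      rw [Finset.sum_div, ← Fin.sum_univ_eq_sum_range
        (fun k => (if a.val / 2^k = 2*(b.val / 2^(k+1)) + (1 - (b.val/2^k)%2) then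
              (1 - 2*(((a.val / 2^k) % 2 : ℕ)) : ℝ) else 0) / m) m]
      apply Finset.sum_congr rfl
      intro k _
      have hcond : (fx a k = fy b k) ↔
          (a.val / 2^(k:ℕ) = 2*(b.val / 2^((k:ℕ)+1)) + (1 - (b.val/2^(k:ℕ))%2)) := by
        rw [hfxdef, hfydef, Fin.mk.injEq]
      by_cases h : fx a k = fy b k
      · rw [if_pos h, if_pos (hcond.1 h)]
        have hc : cx a k = ((1:ℝ) - 2*(((a.val / 2^(k:ℕ)) % 2 : ℕ)))/sq := rfl
        rw [hc, div_mul_div_comm, mul_one, hsq]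
      · rw [if_neg h, if_neg (fun hh => h (hcond.2 hh)), zero_div]
    rw [hxy i j, hxy j i,
      frac_sum_lt m i.val j.val i.isLt j.isLt hij',
      frac_sum_gt m i.val j.val i.isLt j.isLt hij']
    have h1 : max ((1:ℝ)/m) 0 = 1/m := max_eq_left (by positivity)
    have h2 : max ((-1:ℝ)/m) 0 = 0 := max_eq_right (by
      apply div_nonpos_of_nonpos_of_nonneg <;> norm_num [le_of_lt hm'])
    rw [h1, h2, Real.zero_rpow (ne_of_gt hβ.1), sub_zero, one_div,
      Real.inv_rpow (le_of_lt hm'), ← Real.rpow_neg (le_of_lt hm')]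
end

section
/- Naive lower bound for power connectives with α > 1: Fix a real number α > 1 and a positive integer m. There exist a finite-dimensional real inner product space H and vectors x_1,…,x_{2^m}, y_1,…,y_{2^m} in the closed unit ball of H such that for all 1 ≤ i < j ≤ 2^m, (max(⟪x_i,y_j⟫,0))^α − (max(⟪x_j,y_i⟫,0))^α ≥ m^(−α). In particular, f_α(x,y) = (max(⟪x,y⟫,0))^α on the unit ball is not (2^m, m^(−α))-stable. -/
/-!
Label the `2 ^ m` indices by the leaves of a complete binary tree of depth `m`. The vector `x i`
has weight `m ^ (-1/2)` at each node where the path to leaf `i` turns left, and `y i` at each node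
where it turns right; a path has `m` nodes, so all vectors lie in the unit ball. For `i < j` the
paths to `i` and `j` separate at a node where `i` turns left and `j` right, so `⟪x i, y j⟫ ≥ 1 / m`,
while a node where `j` turns left and `i` right would force `j < i`, so `⟪x j, y i⟫ = 0`.
-/

open RealInnerProductSpace Finset

namespace Nat

theorem shiftRight_add_one_eq_iff {i j k : ℕ} :
    i >>> (k + 1) = j >>> (k + 1) ↔ ∀ l, k < l → i.testBit l = j.testBit l := by
  constructor
  · intro h l hl
    obtain ⟨d, rfl⟩ := Nat.exists_eq_add_of_lt hl
    simpa only [testBit_shiftRight, Nat.add_right_comm] using congrArg (testBit · d) h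
  · intro h
    refine eq_of_testBit_eq fun d => ?_
    simp only [testBit_shiftRight]
    exact h _ (by omega)

theorem exists_testBit_split_of_lt {i j : ℕ} (hij : i < j) :
    ∃ k, i.testBit k = false ∧ j.testBit k = true ∧ ∀ l, k < l → i.testBit l = j.testBit l := by
  obtain ⟨k, hk, hk_top⟩ := exists_most_significant_bit (xor_ne_zero_iff.2 hij.ne)
  have h_agree : ∀ l, k < l → i.testBit l = j.testBit l := fun l hl => by
    simpa [testBit_xor] using hk_top l hl
  have h_differ : i.testBit k ≠ j.testBit k := by simpa [testBit_xor] using hk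
  cases hi : i.testBit k
  · exact ⟨k, hi, by simpa [hi] using h_differ.symm, h_agree⟩
  · have hj : j.testBit k = false := by simpa [hi] using h_differ.symm
    exact absurd (lt_of_testBit k hj hi fun l hl => (h_agree l hl).symm) hij.not_gt

end Nat

/-- `(k, p)` encodes the node at height `k` above the leaves `i` with `i >>> (k + 1) = p`;
the path to leaf `i` turns in direction `i.testBit k` there. -/
def branchNodes (m : ℕ) (b : Bool) (i : ℕ) : Finset (Fin m × Fin (2 ^ m)) :=
  {q | i.testBit q.1 = b ∧ i >>> ((q.1 : ℕ) + 1) = q.2}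

theorem card_branchNodes_le (m : ℕ) (b : Bool) (i : ℕ) : #(branchNodes m b i) ≤ m := by
  refine (card_le_card_of_injOn Prod.fst (fun _ _ => mem_coe.2 (mem_univ _)) ?_).trans_eq
    (card_fin m)
  intro q hq r hr hqr
  simp only [branchNodes, coe_filter, Set.mem_ofPred_eq, mem_univ, true_and] at hq hr
  exact Prod.ext hqr (Fin.ext (by rw [← hq.2, ← hr.2, hqr]))

theorem branchNodes_inter_nonempty {m i j : ℕ} (hij : i < j) (hj : j < 2 ^ m) :
    (branchNodes m false i ∩ branchNodes m true j).Nonempty := by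
  obtain ⟨k, hik, hjk, h_agree⟩ := Nat.exists_testBit_split_of_lt hij
  have hkm : k < m :=
    (Nat.pow_lt_pow_iff_right one_lt_two).1 ((Nat.ge_two_pow_of_testBit hjk).trans_lt hj)
  have hp : i >>> (k + 1) < 2 ^ m := (Nat.shiftRight_le i _).trans_lt (hij.trans hj)
  refine ⟨(⟨k, hkm⟩, ⟨i >>> (k + 1), hp⟩), ?_⟩
  simp [branchNodes, hik, hjk, Nat.shiftRight_add_one_eq_iff.2 h_agree]

theorem disjoint_branchNodes {m i j : ℕ} (hij : i ≤ j) :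
    Disjoint (branchNodes m false j) (branchNodes m true i) := by
  refine disjoint_left.2 fun q hj hi => hij.not_gt ?_
  simp only [branchNodes, mem_filter, mem_univ, true_and] at hj hi
  exact Nat.lt_of_testBit q.1 hj.1 hi.1 (Nat.shiftRight_add_one_eq_iff.1 (hj.2.trans hi.2.symm))

section IndicatorVec

variable {ι : Type*} [Fintype ι] [DecidableEq ι]

noncomputable def indicatorVec (s : Finset ι) : EuclideanSpace ℝ ι :=
  WithLp.toLp 2 fun t => if t ∈ s then 1 else 0

theorem inner_indicatorVec (s t : Finset ι) :
    ⟪indicatorVec s, indicatorVec t⟫ = #(s ∩ t) := by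
  simp [indicatorVec, PiLp.inner_apply]

theorem norm_indicatorVec (s : Finset ι) : ‖indicatorVec s‖ = √(#s) := by
  rw [← Real.sqrt_sq (norm_nonneg _), ← real_inner_self_eq_norm_sq, inner_indicatorVec, inter_self]

end IndicatorVec

theorem exists_unitBall_inner_eq_card_inter_div {κ ι : Type*} [Fintype ι] [DecidableEq ι] {m : ℕ}
    (A B : κ → Finset ι) (hA : ∀ i, #(A i) ≤ m) (hB : ∀ i, #(B i) ≤ m) :
    ∃ (N : ℕ) (x y : κ → EuclideanSpace ℝ (Fin N)), (∀ i, ‖x i‖ ≤ 1) ∧ (∀ i, ‖y i‖ ≤ 1) ∧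
      ∀ i j, ⟪x i, y j⟫ = #(A i ∩ B j) / m := by
  let e := LinearIsometryEquiv.piLpCongrLeft 2 ℝ ℝ (Fintype.equivFin ι)
  let v (s : Finset ι) := e ((√m)⁻¹ • indicatorVec s)
  have norm_v_le {s : Finset ι} (hs : #s ≤ m) : ‖v s‖ ≤ 1 := by
    rw [e.norm_map, norm_smul, norm_inv, Real.norm_of_nonneg (Real.sqrt_nonneg _),
      norm_indicatorVec]
    exact inv_mul_le_one_of_le₀ (Real.sqrt_le_sqrt (by exact_mod_cast hs)) (Real.sqrt_nonneg _)
  refine ⟨_, fun i => v (A i), fun j => v (B j), fun i => norm_v_le (hA i),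
    fun j => norm_v_le (hB j), fun i j => ?_⟩
  rw [e.inner_map_map, real_inner_smul_left, real_inner_smul_right, inner_indicatorVec,
    ← mul_assoc, ← mul_inv, Real.mul_self_sqrt (Nat.cast_nonneg m), inv_mul_eq_div]

theorem power_naive_lower_bound_general (α : ℝ) (hα : 1 < α) (m : ℕ) :
    ∃ (N : ℕ) (x y : Fin (2 ^ m) → EuclideanSpace ℝ (Fin N)),
      (∀ i, ‖x i‖ ≤ 1) ∧ (∀ i, ‖y i‖ ≤ 1) ∧
      ∀ i j : Fin (2 ^ m), i < j →
        (m : ℝ) ^ (-α) ≤ (max ⟪x i, y j⟫ 0) ^ α - (max ⟪x j, y i⟫ 0) ^ α := by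
  obtain ⟨N, x, y, hx, hy, hxy⟩ := exists_unitBall_inner_eq_card_inter_div
    (fun i : Fin (2 ^ m) => branchNodes m false i) (fun j => branchNodes m true j)
    (fun _ => card_branchNodes_le _ _ _) (fun _ => card_branchNodes_le _ _ _)
  have hα₀ : 0 < α := by linarith
  refine ⟨N, x, y, hx, hy, fun i j hij => ?_⟩
  have h_split : 1 ≤ #(branchNodes m false i ∩ branchNodes m true j) :=
    card_pos.2 (branchNodes_inter_nonempty hij j.isLt)
  have h_no_split : #(branchNodes m false j ∩ branchNodes m true i) = 0 := by
    rw [card_eq_zero, ← disjoint_iff_inter_eq_empty]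
    exact disjoint_branchNodes hij.le
  rw [hxy, hxy, h_no_split, Nat.cast_zero, zero_div, max_self, Real.zero_rpow hα₀.ne',
    sub_zero, max_eq_left (by positivity), Real.rpow_neg (Nat.cast_nonneg m),
    ← Real.inv_rpow (Nat.cast_nonneg m), inv_eq_one_div]
  gcongr
  exact_mod_cast h_split

/-- Naive lower bound for power connectives `(⟪x,y⟫₊)^α` with `α > 1`. -/
theorem power_naive_lower_bound (α : ℝ) (hα : 1 < α) (m : ℕ) (hm : 0 < m) :
    ∃ (N : ℕ) (x y : Fin (2 ^ m) → EuclideanSpace ℝ (Fin N)),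
      (∀ i, ‖x i‖ ≤ 1) ∧ (∀ i, ‖y i‖ ≤ 1) ∧
      ∀ i j : Fin (2 ^ m), i < j →
        (m : ℝ) ^ (-α) ≤ (max ⟪x i, y j⟫ 0) ^ α - (max ⟪x j, y i⟫ 0) ^ α :=
  power_naive_lower_bound_general α hα m
end

section
/- Shifted lower bound for power connectives with α > 1: Fix a real number α > 1 and a positive integer m. There exist a finite-dimensional real inner product space H and vectors x_1,…,x_{2^m}, y_1,…,y_{2^m} in the closed unit ball of H such that for all 1 ≤ i < j ≤ 2^m, (max(⟪x_i,y_j⟫,0))^α − (max(⟪x_j,y_i⟫,0))^α ≥ (α/2^α)/m. Consequently, f_α(x,y) = (max(⟪x,y⟫,0))^α on the unit ball is not (2^m, (α·2^(−α))/m)-stable, giving failure of (k,ε)-stability for k ≤ exp(c_α/ε) with c_α = (log 2)·α·2^(−α) (up to an O(1) additive error in the exponent). -/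
/-!
Write indices in binary. For `i < j < 2 ^ m` let `t` be the highest bit at which `i` and `j`
differ: then `i` has a `0` and `j` a `1` there. Give `x_i` a unit coordinate `(t, i >>> (t + 1))`
for every level `t` at which `i` has a `0`, and `y_j` the coordinate `(t, j >>> (t + 1))` for
every level at which `j` has a `1`. Then `x_i` and `y_j` share a coordinate only at such a split
bit, which exists iff `i < j` and is then unique. Scaling these coordinates by `√(1 / (2m))`
and adding a common component `√(1 / 2)` gives vectors in the unit ball with
`⟪x_i, y_j⟫ = 1 / 2 + [i < j] / (2m)`, and Bernoulli's inequality bounds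
`(1 / 2 + 1 / (2m)) ^ α - (1 / 2) ^ α` below by `α 2 ^ (-α) / m`.
-/

open RealInnerProductSpace Finset

theorem Fintype.sum_ite_eq_and_eq_and {ι M : Type*} [Fintype ι] [DecidableEq ι] [AddCommMonoid M]
    (p p' : ι) (A B : Prop) [Decidable A] [Decidable B] (c : M) :
    ∑ q, (if (q = p ∧ A) ∧ (q = p' ∧ B) then c else 0) =
      if p = p' ∧ A ∧ B then c else 0 := by
  rw [Fintype.sum_eq_single p fun q hq => if_neg fun h => hq h.1.1]
  by_cases hp : p = p' <;> simp [hp]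

namespace Nat

def IsSplitBit (i j t : ℕ) : Prop :=
  i >>> (t + 1) = j >>> (t + 1) ∧ i.testBit t = false ∧ j.testBit t = true

instance (i j t : ℕ) : Decidable (IsSplitBit i j t) :=
  inferInstanceAs (Decidable (_ ∧ _ ∧ _))

variable {i j t t' m n : ℕ}

theorem shiftRight_eq_shiftRight_iff :
    i >>> n = j >>> n ↔ ∀ s, n ≤ s → i.testBit s = j.testBit s := by
  constructor
  · intro h s hs
    obtain ⟨k, rfl⟩ := Nat.exists_eq_add_of_le hs
    rw [← testBit_shiftRight, h, testBit_shiftRight]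
  · intro h
    exact eq_of_testBit_eq fun k => by
      simpa only [testBit_shiftRight] using h _ (le_add_right n k)

theorem IsSplitBit.lt (h : IsSplitBit i j t) : i < j :=
  lt_of_testBit t h.2.1 h.2.2 fun s hs => shiftRight_eq_shiftRight_iff.1 h.1 s hs

theorem IsSplitBit.unique (h : IsSplitBit i j t) (h' : IsSplitBit i j t') : t = t' := by
  by_contra hne
  wlog hlt : t < t' generalizing t t'
  · exact this h' h (Ne.symm hne) (lt_of_le_of_ne (not_lt.1 hlt) (Ne.symm hne))
  have := shiftRight_eq_shiftRight_iff.1 h.1 t' hlt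
  simp [h'.2.1, h'.2.2] at this

theorem IsSplitBit.lt_of_lt_two_pow (h : IsSplitBit i j t) (hj : j < 2 ^ m) : t < m := by
  by_contra hmt
  have := testBit_eq_false_of_lt (hj.trans_le (Nat.pow_le_pow_right two_pos (not_lt.1 hmt)))
  simp [h.2.2] at this

theorem exists_isSplitBit_of_lt (hij : i < j) : ∃ t, IsSplitBit i j t := by
  obtain ⟨t, hdiff, hhigh⟩ := exists_most_significant_bit (xor_ne_zero_iff.2 hij.ne)
  have hagree : ∀ s, t < s → i.testBit s = j.testBit s := fun s hs => by
    simpa [testBit_xor] using hhigh s hs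
  refine ⟨t, shiftRight_eq_shiftRight_iff.2 hagree, ?_⟩
  rw [testBit_xor] at hdiff
  cases hi : i.testBit t <;> cases hj : j.testBit t <;> simp only [hi, hj] at hdiff
  · simp at hdiff
  · exact ⟨rfl, rfl⟩
  · exact absurd (lt_of_testBit t hj hi fun s hs => (hagree s hs).symm) hij.not_gt
  · simp at hdiff

theorem card_filter_isSplitBit_of_lt (hij : i < j) (hj : j < 2 ^ m) :
    #{t : Fin m | IsSplitBit i j t} = 1 := by
  obtain ⟨t, ht⟩ := exists_isSplitBit_of_lt hij
  rw [card_eq_one]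
  refine ⟨⟨t, ht.lt_of_lt_two_pow hj⟩, ?_⟩
  ext s
  simp only [mem_filter, mem_univ, true_and, mem_singleton]
  exact ⟨fun hs => Fin.ext (hs.unique ht), fun hs => hs ▸ ht⟩

theorem card_filter_isSplitBit_of_le (hji : j ≤ i) : #{t : Fin m | IsSplitBit i j t} = 0 := by
  rw [Finset.card_eq_zero, filter_eq_empty_iff]
  exact fun t _ ht => hji.not_gt ht.lt

end Nat

namespace HalfGraph

variable (m : ℕ)

def highBits (t : ℕ) (i : Fin (2 ^ m)) : Fin (2 ^ m) :=
  ⟨(i : ℕ) >>> (t + 1), (Nat.shiftRight_le _ _).trans_lt i.2⟩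

noncomputable def vec (b : Bool) (i : Fin (2 ^ m)) :
    EuclideanSpace ℝ (Option (Fin m × Fin (2 ^ m))) :=
  WithLp.toLp 2 fun k => k.elim √(1 / 2) fun tq =>
    if tq.2 = highBits m tq.1 i ∧ (i : ℕ).testBit tq.1 = b then √(1 / (2 * m)) else 0

theorem inner_vec (a b : Bool) (i j : Fin (2 ^ m)) :
    ⟪vec m a i, vec m b j⟫ = 1 / 2 + #{t : Fin m | (i : ℕ) >>> ((t : ℕ) + 1) =
      (j : ℕ) >>> ((t : ℕ) + 1) ∧ (i : ℕ).testBit t = a ∧ (j : ℕ).testBit t = b} /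
        (2 * m) := by
  have hc : √(1 / (2 * m)) * √(1 / (2 * m)) = 1 / (2 * m) := Real.mul_self_sqrt (by positivity)
  simp only [PiLp.inner_apply, Real.inner_apply, vec, Fintype.sum_option, Fintype.sum_prod_type,
    Option.elim, ite_zero_mul_ite_zero, hc]
  rw [sum_congr rfl fun t _ => Fintype.sum_ite_eq_and_eq_and _ _ _ _ _,
    Real.mul_self_sqrt (by norm_num), sum_ite, sum_const, sum_const_zero, nsmul_eq_mul]
  simp only [highBits, Fin.mk.injEq]
  ring

theorem card_div_two_mul_le_half (s : Finset (Fin m)) : (#s : ℝ) / (2 * m) ≤ 1 / 2 := by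
  rcases m.eq_zero_or_pos with rfl | hm
  · simp
  rw [div_le_iff₀ (by positivity)]
  have : (#s : ℝ) ≤ m := by exact_mod_cast (card_le_univ s).trans_eq (card_fin m)
  linarith

theorem norm_vec_le_one (b : Bool) (i : Fin (2 ^ m)) : ‖vec m b i‖ ≤ 1 := by
  rw [← sq_le_one_iff₀ (norm_nonneg _), ← real_inner_self_eq_norm_sq, inner_vec]
  grw [card_div_two_mul_le_half]
  norm_num

theorem inner_vec_false_true_of_lt {i j : Fin (2 ^ m)} (hij : i < j) :
    ⟪vec m false i, vec m true j⟫ = 1 / 2 + 1 / (2 * m) := by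
  rw [inner_vec]
  congr 2
  exact_mod_cast Nat.card_filter_isSplitBit_of_lt hij j.2

theorem inner_vec_false_true_of_le {i j : Fin (2 ^ m)} (hji : j ≤ i) :
    ⟪vec m false i, vec m true j⟫ = 1 / 2 := by
  rw [inner_vec, add_eq_left, div_eq_zero_iff, Nat.cast_eq_zero]
  exact .inl (Nat.card_filter_isSplitBit_of_le (Fin.le_def.1 hji))

end HalfGraph

theorem rpow_mul_one_add_mul_le_mul_one_add_rpow {a s p : ℝ} (ha : 0 ≤ a) (hs : -1 ≤ s)
    (hp : 1 ≤ p) : a ^ p * (1 + p * s) ≤ (a * (1 + s)) ^ p := by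
  rw [Real.mul_rpow ha (by linarith)]
  exact mul_le_mul_of_nonneg_left (one_add_mul_self_le_rpow_one_add hs hp) (Real.rpow_nonneg ha p)

theorem div_two_rpow_div_le_rpow_sub_rpow {α : ℝ} (hα : 1 ≤ α) (m : ℕ) :
    α / 2 ^ α / m ≤ (1 / 2 + 1 / (2 * m)) ^ α - (1 / 2 : ℝ) ^ α := by
  have hbernoulli := rpow_mul_one_add_mul_le_mul_one_add_rpow (a := 1 / 2) (s := 1 / m)
    (by norm_num) (by linarith [show (0 : ℝ) ≤ 1 / m by positivity]) hα
  have hhalf : (1 / 2 : ℝ) ^ α = 1 / 2 ^ α := by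
    rw [Real.div_rpow zero_le_one zero_le_two, Real.one_rpow]
  calc α / 2 ^ α / m = (1 / 2) ^ α * (1 + α * (1 / m)) - (1 / 2) ^ α := by rw [hhalf]; ring
    _ ≤ (1 / 2 * (1 + 1 / m)) ^ α - (1 / 2) ^ α := by linarith
    _ = (1 / 2 + 1 / (2 * m)) ^ α - (1 / 2) ^ α := by ring_nf

theorem power_shifted_lower_bound_general (α : ℝ) (hα : 1 < α) (m : ℕ) :
    ∃ (N : ℕ) (x y : Fin (2 ^ m) → EuclideanSpace ℝ (Fin N)),
      (∀ i, ‖x i‖ ≤ 1) ∧ (∀ i, ‖y i‖ ≤ 1) ∧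
      ∀ i j : Fin (2 ^ m), i < j →
        (α / (2 : ℝ) ^ α) / (m : ℝ)
          ≤ (max ⟪x i, y j⟫ 0) ^ α - (max ⟪x j, y i⟫ 0) ^ α := by
  let e := LinearIsometryEquiv.piLpCongrLeft 2 ℝ ℝ
    (Fintype.equivFin (Option (Fin m × Fin (2 ^ m))))
  refine ⟨_, fun i => e (HalfGraph.vec m false i), fun j => e (HalfGraph.vec m true j),
    fun i => by simpa using HalfGraph.norm_vec_le_one m false i,
    fun j => by simpa using HalfGraph.norm_vec_le_one m true j, fun i j hij => ?_⟩
  simp only [LinearIsometryEquiv.inner_map_map, HalfGraph.inner_vec_false_true_of_lt m hij,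
    HalfGraph.inner_vec_false_true_of_le m hij.le]
  rw [max_eq_left (by positivity), max_eq_left (by positivity)]
  exact div_two_rpow_div_le_rpow_sub_rpow hα.le m

/-- Shifted lower bound for power connectives `(⟪x,y⟫₊)^α` with `α > 1`. -/
theorem power_shifted_lower_bound (α : ℝ) (hα : 1 < α) (m : ℕ) (hm : 0 < m) :
    ∃ (N : ℕ) (x y : Fin (2 ^ m) → EuclideanSpace ℝ (Fin N)),
      (∀ i, ‖x i‖ ≤ 1) ∧ (∀ i, ‖y i‖ ≤ 1) ∧
      ∀ i j : Fin (2 ^ m), i < j →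
        (α / (2 : ℝ) ^ α) / (m : ℝ)
          ≤ (max ⟪x i, y j⟫ 0) ^ α - (max ⟪x j, y i⟫ 0) ^ α :=
  power_shifted_lower_bound_general α hα m
end

section
/- Shifted lower bound for integer power connectives: Fix an integer d ≥ 1 and a positive integer m. There exist a finite-dimensional real inner product space H and vectors x_1,…,x_{2^m}, y_1,…,y_{2^m} in the closed unit ball of H such that for all 1 ≤ i < j ≤ 2^m, ⟪x_i,y_j⟫^d − ⟪x_j,y_i⟫^d ≥ (d/2^d)/m. In particular, the predicate f_d(x,y) = ⟪x,y⟫^d on the unit ball is not (2^m, (d·2^(−d))/m)-stable. -/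
/-!
Vectors with `⟪u i, v j⟫ = sign (j - i)` and squared norms at most `m` exist for `2 ^ m` indices:
each doubling of the index set costs one unit of squared norm. A common coordinate of weight `1/2`
and scaling by `(2m)^(-1/2)` move them into the unit ball with `⟪x i, y j⟫ = (1 ± 1/m) / 2`, and by
Bernoulli's inequality the `d`-th powers of these two values differ by at least `d / (2^d m)`.
-/

open RealInnerProductSpace WithLp

section Doubling

variable {E : Type*} [NormedAddCommGroup E] {n : ℕ}

/- The two halves of `Fin (n + n)` get orthogonal copies of `E`; the extra coordinates are
`e₁, e₂` on the left and `-e₂, e₁` on the right, so they pair to `0` within a half and to `±1`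
across the halves. -/
noncomputable def doubleLeft (u : Fin n → E) :
    Fin (n + n) → WithLp 2 (WithLp 2 (ℝ × E) × WithLp 2 (ℝ × E)) :=
  Fin.append (fun r => toLp 2 (toLp 2 (1, u r), 0)) (fun r => toLp 2 (0, toLp 2 (1, u r)))

noncomputable def doubleRight (v : Fin n → E) :
    Fin (n + n) → WithLp 2 (WithLp 2 (ℝ × E) × WithLp 2 (ℝ × E)) :=
  Fin.append (fun r => toLp 2 (toLp 2 (0, v r), toLp 2 (-1, 0)))
    (fun r => toLp 2 (toLp 2 (1, 0), toLp 2 (0, v r)))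

lemma norm_sq_doubleLeft_le {u : Fin n → E} {c : ℝ} (hu : ∀ r, ‖u r‖ ^ 2 ≤ c)
    (i : Fin (n + n)) : ‖doubleLeft u i‖ ^ 2 ≤ c + 1 := by
  refine Fin.addCases (fun r => ?_) (fun r => ?_) i <;>
    simp only [doubleLeft, Fin.append_left, Fin.append_right] <;>
    simpa [prod_norm_sq_eq_of_L2, add_comm] using hu r

lemma norm_sq_doubleRight_le {v : Fin n → E} {c : ℝ} (hv : ∀ r, ‖v r‖ ^ 2 ≤ c)
    (j : Fin (n + n)) : ‖doubleRight v j‖ ^ 2 ≤ c + 1 := by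
  refine Fin.addCases (fun r => ?_) (fun r => ?_) j <;>
    simp only [doubleRight, Fin.append_left, Fin.append_right] <;>
    simpa [prod_norm_sq_eq_of_L2, add_comm] using hv r

lemma inner_doubleLeft_doubleRight [InnerProductSpace ℝ E] {u v : Fin n → E}
    (huv : ∀ i j, ⟪u i, v j⟫ = SignType.sign ((j : ℝ) - i)) (i j : Fin (n + n)) :
    ⟪doubleLeft u i, doubleRight v j⟫ = SignType.sign ((j : ℝ) - i) := by
  refine Fin.addCases (fun r => ?_) (fun r => ?_) i <;>
    refine Fin.addCases (fun s => ?_) (fun s => ?_) j <;>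
    simp only [doubleLeft, doubleRight, Fin.append_left, Fin.append_right] <;>
    simp [huv]
  · have : (r : ℝ) < n := by exact_mod_cast r.isLt
    rw [sign_pos (by linarith), SignType.coe_one]
  · have : (s : ℝ) < n := by exact_mod_cast s.isLt
    rw [sign_neg (by linarith), SignType.coe_neg_one]

end Doubling

theorem exists_inner_eq_sign_sub (m : ℕ) :
    ∃ (N : ℕ) (u v : Fin (2 ^ m) → EuclideanSpace ℝ (Fin N)),
      (∀ i, ‖u i‖ ^ 2 ≤ m) ∧ (∀ j, ‖v j‖ ^ 2 ≤ m) ∧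
      ∀ i j, ⟪u i, v j⟫ = SignType.sign ((j : ℝ) - i) := by
  induction m with
  | zero =>
    exact ⟨0, 0, 0, by simp, by simp, fun i j => by rw [Subsingleton.elim (α := Fin 1) i j]; simp⟩
  | succ m ih =>
    obtain ⟨N, u, v, hu, hv, huv⟩ := ih
    let e := (stdOrthonormalBasis ℝ (WithLp 2 (WithLp 2 (ℝ × EuclideanSpace ℝ (Fin N)) ×
      WithLp 2 (ℝ × EuclideanSpace ℝ (Fin N))))).repr
    rw [pow_succ, mul_two]
    refine ⟨_, e ∘ doubleLeft u, e ∘ doubleRight v, fun i => ?_, fun j => ?_, fun i j => ?_⟩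
    · simpa using norm_sq_doubleLeft_le hu i
    · simpa using norm_sq_doubleRight_le hv j
    · simpa using inner_doubleLeft_doubleRight huv i j

lemma mul_div_two_pow_le_pow_sub_pow (d : ℕ) {a : ℝ} (h0 : 0 ≤ a) (h1 : a ≤ 1) :
    d * a / 2 ^ d ≤ ((1 + a) / 2) ^ d - ((1 - a) / 2) ^ d := by
  have hplus : 1 + d * a ≤ (1 + a) ^ d := one_add_mul_le_pow (by linarith) d
  have hminus : (1 - a) ^ d ≤ 1 := pow_le_one₀ (by linarith) (by linarith)
  rw [div_pow, div_pow, ← sub_div]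
  gcongr
  linarith

theorem exists_norm_le_one_inner_eq (m : ℕ) :
    ∃ (N : ℕ) (x y : Fin (2 ^ m) → EuclideanSpace ℝ (Fin N)),
      (∀ i, ‖x i‖ ≤ 1) ∧ (∀ j, ‖y j‖ ≤ 1) ∧
      ∀ i j, ⟪x i, y j⟫ = (1 + SignType.sign ((j : ℝ) - i) / m) / 2 := by
  obtain ⟨N, u, v, hu, hv, huv⟩ := exists_inner_eq_sign_sub m
  obtain ⟨a, ha⟩ : ∃ a : ℝ, a ^ 2 = 2⁻¹ := ⟨_, Real.sq_sqrt (by norm_num)⟩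
  obtain ⟨b, hb⟩ : ∃ b : ℝ, b ^ 2 = (2 * m : ℝ)⁻¹ := ⟨_, Real.sq_sqrt (by positivity)⟩
  have hbm : b ^ 2 * m ≤ 2⁻¹ := by
    rw [hb, mul_inv, mul_assoc]
    exact mul_le_of_le_one_right (by norm_num) (inv_mul_le_one_of_le₀ le_rfl m.cast_nonneg)
  let e := (stdOrthonormalBasis ℝ (WithLp 2 (ℝ × EuclideanSpace ℝ (Fin N)))).repr
  let shift (w : EuclideanSpace ℝ (Fin N)) := e (toLp 2 (a, b • w))
  have norm_shift {w} (hw : ‖w‖ ^ 2 ≤ m) : ‖shift w‖ ≤ 1 := by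
    rw [← sq_le_one_iff₀ (norm_nonneg _)]
    simp only [shift, LinearIsometryEquiv.norm_map, prod_norm_sq_eq_of_L2, toLp_fst, toLp_snd,
      norm_smul, mul_pow, Real.norm_eq_abs, sq_abs]
    nlinarith [mul_le_mul_of_nonneg_left hw (sq_nonneg b)]
  refine ⟨_, shift ∘ u, shift ∘ v, fun i => norm_shift (hu i), fun j => norm_shift (hv j),
    fun i j => ?_⟩
  simp only [shift, Function.comp_apply, LinearIsometryEquiv.inner_map_map, prod_inner_apply,
    inner_smul_left, inner_smul_right, real_inner_self_eq_norm_sq, Real.norm_eq_abs, sq_abs,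
    RCLike.conj_to_real, huv]
  linear_combination ha + (SignType.sign ((j : ℝ) - i) : ℝ) * hb

theorem integer_power_shifted_lower_bound_general (d : ℕ) (m : ℕ) :
    ∃ (N : ℕ) (x y : Fin (2 ^ m) → EuclideanSpace ℝ (Fin N)),
      (∀ i, ‖x i‖ ≤ 1) ∧ (∀ i, ‖y i‖ ≤ 1) ∧
      ∀ i j : Fin (2 ^ m), i < j →
        ((d : ℝ) / 2 ^ d) / (m : ℝ) ≤ ⟪x i, y j⟫ ^ d - ⟪x j, y i⟫ ^ d := by
  obtain ⟨N, x, y, hx, hy, hxy⟩ := exists_norm_le_one_inner_eq m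
  refine ⟨N, x, y, hx, hy, fun i j hij => ?_⟩
  have hij : (i : ℝ) < j := by exact_mod_cast hij
  rw [hxy, hxy, sign_pos (sub_pos.2 hij), sign_neg (sub_neg.2 hij), SignType.coe_one,
    SignType.coe_neg_one, neg_div, ← sub_eq_add_neg]
  calc (d : ℝ) / 2 ^ d / m = d * (1 / m) / 2 ^ d := by ring
    _ ≤ _ := mul_div_two_pow_le_pow_sub_pow d (by positivity) (by simpa using m.cast_inv_le_one)

/-- Shifted lower bound for integer power connectives `⟪x,y⟫^d`. -/
theorem integer_power_shifted_lower_bound (d : ℕ) (hd : 1 ≤ d) (m : ℕ) (hm : 0 < m) :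
    ∃ (N : ℕ) (x y : Fin (2 ^ m) → EuclideanSpace ℝ (Fin N)),
      (∀ i, ‖x i‖ ≤ 1) ∧ (∀ i, ‖y i‖ ≤ 1) ∧
      ∀ i j : Fin (2 ^ m), i < j →
        ((d : ℝ) / 2 ^ d) / (m : ℝ) ≤ ⟪x i, y j⟫ ^ d - ⟪x j, y i⟫ ^ d :=
  integer_power_shifted_lower_bound_general d m
end

section
/- Upper bound for continuous connectives via polynomial approximation: Let ε ∈ (0,1), let g : ℝ → ℝ, and suppose p(t) = a_0 + ∑_{d=1}^D a_d t^d is a real polynomial with |g(t) − p(t)| ≤ ε/4 for all t ∈ [−1,1]. Set A = ∑_{d=1}^D |a_d| and assume A > 0. Let H be a real inner product space and let x_1,…,x_k and y_1,…,y_k be vectors in H with ‖x_i‖ ≤ 1 and ‖y_i‖ ≤ 1, such that g(⟪x_i,y_j⟫) − g(⟪x_j,y_i⟫) ≥ ε for all 1 ≤ i < j ≤ k. Then log k ≤ 2πA/ε + 1. -/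
/-!
Write `q(t) = ∑_{d ≥ 1} a_d t^d` and weigh the numbers `q⟪x_i, y_j⟫` by `1/(j - i)`.
From below, the gaps `q⟪x_i, y_j⟫ - q⟪x_j, y_i⟫ ≥ ε/2` for `i < j` make the weighted sum at
least `(ε/2) ∑_{i<j} 1/(j - i) ≥ (ε/2)(k log k - k)`. From above, `π/m` is the `m`-th sine
coefficient of the sawtooth wave `(π - θ)/2` on `[0, 2π]`, so the weighted sum is `1/π` times
the integral of the sawtooth against `P(θ) = ∑ sin((j - i)θ) q⟪x_i, y_j⟫`. By the Schur product
theorem `⟪·,·⟫^d` is a positive semidefinite kernel, which bounds `|P(θ)|` by `∑ |a_d|` times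
cosine-weighted Gram forms; over a period these only see their diagonals, so their integrals
are at most `2πk`. Hence the weighted sum is at most `πk ∑ |a_d|`.
-/

open RealInnerProductSpace Real Finset Matrix

theorem Finset.sum_sum_eq_sum_sum_lt_add_diag {ι M : Type*} [Fintype ι] [LinearOrder ι]
    [AddCommMonoid M] (f : ι → ι → M) :
    ∑ i, ∑ j, f i j = ∑ i, ∑ j, (if i < j then f i j + f j i else 0) + ∑ i, f i i := by
  have split : ∀ i j, f i j =
      (if i < j then f i j else 0) + (if j < i then f i j else 0) + (if i = j then f i j else 0) :=
    fun i j => by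
      rcases lt_trichotomy i j with h | rfl | h
      · simp [h, h.ne, h.not_gt]
      · simp
      · simp [h, h.ne', h.not_gt]
  have swap : ∑ i, ∑ j, (if j < i then f i j else 0) = ∑ i, ∑ j, if i < j then f j i else 0 :=
    sum_comm
  simp_rw [ite_add_zero (a := f _ _), sum_add_distrib]
  conv_lhs => enter [2, i, 2, j]; rw [split i j]
  simp only [sum_add_distrib, swap, sum_ite_eq, mem_univ, if_true]

theorem natCast_mul_log_sub_le_log_factorial (k : ℕ) :
    (k : ℝ) * log k - k ≤ log (k.factorial : ℝ) := by
  rcases k.eq_zero_or_pos with rfl | hk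
  · simp
  have h := log_le_log (by positivity) (pow_div_factorial_le_exp _ k.cast_nonneg k)
  rw [log_div (by positivity) (by positivity), log_pow, log_exp] at h
  linarith

theorem natCast_mul_log_sub_le_sum_harmonic (k : ℕ) :
    (k : ℝ) * log k - k ≤ ∑ j ∈ range k, (harmonic j : ℝ) := by
  refine (natCast_mul_log_sub_le_log_factorial k).trans ?_
  rw [← prod_range_add_one_eq_factorial, Nat.cast_prod, log_prod (fun j _ => by positivity)]
  exact sum_le_sum fun j _ => by exact_mod_cast log_add_one_le_harmonic j

theorem sum_ite_lt_inv_sub_eq_harmonic {k : ℕ} (j : Fin k) :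
    ∑ i : Fin k, (if i < j then ((j : ℝ) - i)⁻¹ else 0) = harmonic j := by
  simp only [Fin.lt_def]
  rw [Fin.sum_univ_eq_sum_range (fun i => if i < (j : ℕ) then ((j : ℝ) - i)⁻¹ else 0),
    ← sum_filter, show (range k).filter (· < (j : ℕ)) = range j by ext; simp; omega, harmonic,
    Rat.cast_sum, ← sum_range_reflect]
  refine sum_congr rfl fun i hi => ?_
  rw [mem_range] at hi
  rw [Nat.sub_sub, Nat.cast_sub (by omega : 1 + i ≤ (j : ℕ))]
  push_cast
  ring

theorem natCast_mul_log_sub_le_sum_sum_ite_lt_inv_sub (k : ℕ) :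
    (k : ℝ) * log k - k ≤ ∑ i : Fin k, ∑ j : Fin k, if i < j then ((j : ℝ) - i)⁻¹ else 0 := by
  rw [sum_comm]
  simp only [sum_ite_lt_inv_sub_eq_harmonic]
  rw [Fin.sum_univ_eq_sum_range (fun j => (harmonic j : ℝ))]
  exact natCast_mul_log_sub_le_sum_harmonic k

theorem mul_natCast_mul_log_sub_le_sum_sum_div_sub {k : ℕ} {c : ℝ} (hc : 0 ≤ c)
    {b : Fin k → Fin k → ℝ} (hb : ∀ i j, i < j → c ≤ b i j - b j i) :
    c * (k * log k - k) ≤ ∑ i, ∑ j, b i j / ((j : ℝ) - i) := by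
  rw [sum_sum_eq_sum_sum_lt_add_diag]
  simp only [sub_self, div_zero, sum_const_zero, add_zero]
  refine (mul_le_mul_of_nonneg_left (natCast_mul_log_sub_le_sum_sum_ite_lt_inv_sub k) hc).trans ?_
  simp only [mul_sum]
  refine sum_le_sum fun i _ => sum_le_sum fun j _ => ?_
  split_ifs with h
  · have hpos : (0 : ℝ) < (j : ℝ) - i := sub_pos.mpr (by exact_mod_cast h)
    rw [← neg_sub (j : ℝ) i, div_neg, ← sub_eq_add_neg, ← sub_div, ← div_eq_mul_inv]
    exact div_le_div_of_nonneg_right (hb i j h) hpos.le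
  · simp

theorem integral_cos_int_mul_eq_zero {m : ℤ} (hm : m ≠ 0) :
    ∫ θ in (0 : ℝ)..2 * π, cos (m * θ) = 0 := by
  rw [intervalIntegral.integral_comp_mul_left cos (Int.cast_ne_zero.mpr hm), integral_cos,
    mul_zero, sin_zero, show (m : ℝ) * (2 * π) = (2 * m : ℤ) * π by push_cast; ring,
    sin_int_mul_pi]
  simp

-- At `m = 0` both sides vanish, `π / 0` being `0`; this matches the diagonal terms below.
theorem integral_sawtooth_mul_sin (m : ℤ) :
    ∫ θ in (0 : ℝ)..2 * π, (π - θ) / 2 * sin (m * θ) = π / m := by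
  rcases eq_or_ne m 0 with rfl | hm
  · simp
  have hm' : (m : ℝ) ≠ 0 := Int.cast_ne_zero.mpr hm
  have hderiv : ∀ θ ∈ Set.uIcc (0 : ℝ) (2 * π),
      HasDerivAt (fun s => (s - π) / (2 * m) * cos (m * s) - sin (m * s) / (2 * m ^ 2))
        ((π - θ) / 2 * sin (m * θ)) θ := by
    intro θ _
    have hc := ((hasDerivAt_id θ).const_mul (m : ℝ)).cos
    have hs := ((hasDerivAt_id θ).const_mul (m : ℝ)).sin
    have hl := ((hasDerivAt_id θ).sub_const π).div_const (2 * (m : ℝ))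
    refine ((hl.mul hc).sub (hs.div_const (2 * (m : ℝ) ^ 2))).congr_deriv ?_
    simp only [id]
    field_simp
    ring
  rw [intervalIntegral.integral_eq_sub_of_hasDerivAt hderiv
    (by apply Continuous.intervalIntegrable; fun_prop),
    show (m : ℝ) * (2 * π) = (2 * m : ℤ) * π by push_cast; ring, sin_int_mul_pi,
    show ((2 * m : ℤ) : ℝ) * π = m * (2 * π) by push_cast; ring, cos_int_mul_two_pi]
  field_simp
  simp
  ring

section

variable {α ι H : Type*} [Fintype α] [Fintype ι] [NormedAddCommGroup H] [InnerProductSpace ℝ H]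

theorem intervalIntegral.integral_sum_sum {f : ι → ι → ℝ → ℝ} (hf : ∀ i j, Continuous (f i j))
    (a b : ℝ) : ∫ θ in a..b, ∑ i, ∑ j, f i j θ = ∑ i, ∑ j, ∫ θ in a..b, f i j θ := by
  rw [integral_finsetSum fun i _ =>
    (continuous_finsetSum _ fun j _ => hf i j).intervalIntegrable _ _]
  exact sum_congr rfl fun i _ => integral_finsetSum fun j _ => (hf i j).intervalIntegrable _ _

theorem integral_sum_sum_cos_sub_mul {n : ι → ℤ} (hn : Function.Injective n)
    (L : ι → ι → ℝ) :
    ∫ θ in (0 : ℝ)..2 * π, ∑ i, ∑ j, cos ((n i - n j : ℝ) * θ) * L i j =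
      2 * π * ∑ i, L i i := by
  classical
  have hcos : ∀ i j, ∫ θ in (0 : ℝ)..2 * π, cos ((n i - n j : ℝ) * θ) =
      if i = j then 2 * π else 0 := by
    intro i j
    split_ifs with h
    · simp [h]
    · rw [← Int.cast_sub]
      exact integral_cos_int_mul_eq_zero (sub_ne_zero.mpr (hn.ne h))
  rw [intervalIntegral.integral_sum_sum (by fun_prop)]
  simp only [intervalIntegral.integral_mul_const, hcos, ite_mul, zero_mul, sum_ite_eq,
    mem_univ, if_true, mul_sum]

theorem integral_sawtooth_mul_sum_sum_sin (n : ι → ℤ) (b : ι → ι → ℝ) :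
    ∫ θ in (0 : ℝ)..2 * π, (π - θ) / 2 * ∑ i, ∑ j, sin ((n j - n i : ℝ) * θ) * b i j =
      π * ∑ i, ∑ j, b i j / (n j - n i : ℝ) := by
  simp_rw [mul_sum, ← mul_assoc]
  rw [intervalIntegral.integral_sum_sum (by fun_prop)]
  simp_rw [intervalIntegral.integral_mul_const, ← Int.cast_sub, integral_sawtooth_mul_sin]
  exact sum_congr rfl fun i _ => sum_congr rfl fun j _ => by ring

theorem Matrix.posSemidef_of_inner_pow (Z : α → H) (d : ℕ) :
    (of fun a b => ⟪Z a, Z b⟫ ^ d).PosSemidef := by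
  induction d with
  | zero =>
    simpa [gram] using posSemidef_gram ℝ fun _ : α => (1 : ℝ)
  | succ d ih =>
    have h : (of fun a b => ⟪Z a, Z b⟫ ^ (d + 1)) =
        (of fun a b => ⟪Z a, Z b⟫ ^ d) ⊙ gram ℝ Z := by
      ext a b
      simp [gram, pow_succ]
    exact h ▸ ih.hadamard (posSemidef_gram ℝ Z)

theorem Matrix.PosSemidef.sum_sum_cos_sub_mul_nonneg {M : Matrix α α ℝ} (hM : M.PosSemidef)
    (φ : α → ℝ) : 0 ≤ ∑ a, ∑ b, cos (φ a - φ b) * M a b := by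
  have h := add_nonneg (hM.dotProduct_mulVec_nonneg (cos ∘ φ))
    (hM.dotProduct_mulVec_nonneg (sin ∘ φ))
  simp only [star_trivial, dotProduct, mulVec, mul_sum, ← sum_add_distrib] at h
  refine h.trans_eq (sum_congr rfl fun a _ => sum_congr rfl fun b _ => ?_)
  simp only [Function.comp, cos_sub]
  ring

theorem sum_sum_cos_sub_mul_inner_pow_nonneg (x y : ι → H) (d : ℕ) (φ ψ : ι → ℝ) :
    0 ≤ ∑ i, ∑ j, cos (φ i - φ j) * ⟪x i, x j⟫ ^ d + ∑ i, ∑ j, cos (ψ i - ψ j) * ⟪y i, y j⟫ ^ d +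
      2 * ∑ i, ∑ j, cos (φ i - ψ j) * ⟪x i, y j⟫ ^ d := by
  have h := (posSemidef_of_inner_pow (Sum.elim x y) d).sum_sum_cos_sub_mul_nonneg (Sum.elim φ ψ)
  have hyx : ∑ i, ∑ j, cos (ψ i - φ j) * ⟪y i, x j⟫ ^ d =
      ∑ i, ∑ j, cos (φ i - ψ j) * ⟪x i, y j⟫ ^ d := by
    rw [sum_comm]
    exact sum_congr rfl fun i _ => sum_congr rfl fun j _ => by
      rw [real_inner_comm, ← cos_neg, neg_sub]
  simp only [Fintype.sum_sum_type, Sum.elim_inl, Sum.elim_inr, of_apply, sum_add_distrib,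
    hyx] at h
  linarith

theorem two_mul_abs_sum_sum_sin_sub_mul_inner_pow_le (x y : ι → H) (d : ℕ) (ψ : ι → ℝ) :
    2 * |∑ i, ∑ j, sin (ψ j - ψ i) * ⟪x i, y j⟫ ^ d| ≤
      ∑ i, ∑ j, cos (ψ i - ψ j) * ⟪x i, x j⟫ ^ d + ∑ i, ∑ j, cos (ψ i - ψ j) * ⟪y i, y j⟫ ^ d := by
  -- Shifting the phases of `y` by `±π/2` turns the cross cosines into `∓` sines.
  have hplus := sum_sum_cos_sub_mul_inner_pow_nonneg x y d ψ (ψ · + π / 2)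
  have hminus := sum_sum_cos_sub_mul_inner_pow_nonneg x y d ψ (ψ · - π / 2)
  have e₁ : ∀ i j, cos (ψ i - (ψ j + π / 2)) = -sin (ψ j - ψ i) := fun i j => by
    rw [← sin_neg, neg_sub, ← cos_sub_pi_div_two]; congr 1; ring
  have e₂ : ∀ i j, cos (ψ i - (ψ j - π / 2)) = sin (ψ j - ψ i) := fun i j => by
    rw [← cos_pi_div_two_sub]; congr 1; ring
  simp only [e₁, e₂, add_sub_add_right_eq_sub, sub_sub_sub_cancel_right, neg_mul,
    sum_neg_distrib] at hplus hminus
  rcases abs_cases (∑ i, ∑ j, sin (ψ j - ψ i) * ⟪x i, y j⟫ ^ d) with ⟨h, -⟩ | ⟨h, -⟩ <;>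
    rw [h] <;> linarith

theorem two_mul_abs_sum_sum_sin_sub_mul_poly_inner_le (x y : ι → H) (s : Finset ℕ) (a : ℕ → ℝ)
    (ψ : ι → ℝ) :
    2 * |∑ i, ∑ j, sin (ψ j - ψ i) * ∑ d ∈ s, a d * ⟪x i, y j⟫ ^ d| ≤
      ∑ d ∈ s, |a d| * (∑ i, ∑ j, cos (ψ i - ψ j) * ⟪x i, x j⟫ ^ d +
        ∑ i, ∑ j, cos (ψ i - ψ j) * ⟪y i, y j⟫ ^ d) := by
  have h : ∑ i, ∑ j, sin (ψ j - ψ i) * ∑ d ∈ s, a d * ⟪x i, y j⟫ ^ d =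
      ∑ d ∈ s, a d * ∑ i, ∑ j, sin (ψ j - ψ i) * ⟪x i, y j⟫ ^ d := by
    simp only [mul_sum]
    refine (sum_congr rfl fun i _ => sum_comm).trans (sum_comm.trans ?_)
    exact sum_congr rfl fun d _ => sum_congr rfl fun i _ => sum_congr rfl fun j _ => by ring
  rw [h]
  refine (mul_le_mul_of_nonneg_left (abs_sum_le_sum_abs _ _) two_pos.le).trans ?_
  rw [mul_sum]
  refine sum_le_sum fun d _ => ?_
  rw [abs_mul, mul_left_comm]
  exact mul_le_mul_of_nonneg_left (two_mul_abs_sum_sum_sin_sub_mul_inner_pow_le x y d ψ)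
    (abs_nonneg _)

theorem sum_inner_self_pow_le_card {z : ι → H} (hz : ∀ i, ‖z i‖ ≤ 1) (d : ℕ) :
    ∑ i, ⟪z i, z i⟫ ^ d ≤ Fintype.card ι := by
  refine (sum_le_sum fun i _ => pow_le_one₀ real_inner_self_nonneg ?_).trans_eq (by simp)
  rw [real_inner_self_eq_norm_sq]
  exact pow_le_one₀ (norm_nonneg _) (hz i)

theorem integral_sum_sum_cos_sub_mul_inner_pow_le {n : ι → ℤ} (hn : Function.Injective n)
    {z : ι → H} (hz : ∀ i, ‖z i‖ ≤ 1) (d : ℕ) :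
    ∫ θ in (0 : ℝ)..2 * π, ∑ i, ∑ j, cos ((n i - n j : ℝ) * θ) * ⟪z i, z j⟫ ^ d ≤
      2 * π * Fintype.card ι := by
  rw [integral_sum_sum_cos_sub_mul hn]
  exact mul_le_mul_of_nonneg_left (sum_inner_self_pow_le_card hz d) (by positivity)

theorem sum_sum_poly_inner_div_sub_le {n : ι → ℤ} (hn : Function.Injective n) {x y : ι → H}
    (hx : ∀ i, ‖x i‖ ≤ 1) (hy : ∀ i, ‖y i‖ ≤ 1) (s : Finset ℕ) (a : ℕ → ℝ) :
    ∑ i, ∑ j, (∑ d ∈ s, a d * ⟪x i, y j⟫ ^ d) / (n j - n i : ℝ) ≤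
      π * Fintype.card ι * ∑ d ∈ s, |a d| := by
  have hpointwise : ∀ θ ∈ Set.Icc 0 (2 * π),
      (π - θ) / 2 * ∑ i, ∑ j, sin ((n j - n i : ℝ) * θ) * ∑ d ∈ s, a d * ⟪x i, y j⟫ ^ d ≤
        π / 4 * ∑ d ∈ s, |a d| * (∑ i, ∑ j, cos ((n i - n j : ℝ) * θ) * ⟪x i, x j⟫ ^ d +
          ∑ i, ∑ j, cos ((n i - n j : ℝ) * θ) * ⟪y i, y j⟫ ^ d) := by
    rintro θ ⟨hθ₀, hθ₁⟩
    have h := two_mul_abs_sum_sum_sin_sub_mul_poly_inner_le x y s a (n · * θ)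
    simp only [← sub_mul] at h
    set P := ∑ i, ∑ j, sin ((n j - n i : ℝ) * θ) * ∑ d ∈ s, a d * ⟪x i, y j⟫ ^ d
    have hsaw : |(π - θ) / 2| ≤ π / 2 := abs_le.mpr ⟨by linarith, by linarith⟩
    calc (π - θ) / 2 * P ≤ |(π - θ) / 2| * |P| := (le_abs_self _).trans (abs_mul _ _).le
      _ ≤ π / 2 * |P| := by gcongr
      _ ≤ _ := by nlinarith [pi_pos]
  have hintegral : ∫ θ in (0 : ℝ)..2 * π,
      π / 4 * ∑ d ∈ s, |a d| * (∑ i, ∑ j, cos ((n i - n j : ℝ) * θ) * ⟪x i, x j⟫ ^ d +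
          ∑ i, ∑ j, cos ((n i - n j : ℝ) * θ) * ⟪y i, y j⟫ ^ d) ≤
      π * (π * Fintype.card ι * ∑ d ∈ s, |a d|) := by
    rw [intervalIntegral.integral_const_mul, intervalIntegral.integral_finsetSum (fun d _ => by
      apply Continuous.intervalIntegrable; fun_prop)]
    have hbound : ∀ d, ∫ θ in (0 : ℝ)..2 * π,
        (∑ i, ∑ j, cos ((n i - n j : ℝ) * θ) * ⟪x i, x j⟫ ^ d +
          ∑ i, ∑ j, cos ((n i - n j : ℝ) * θ) * ⟪y i, y j⟫ ^ d) ≤ 4 * π * Fintype.card ι := by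
      intro d
      rw [intervalIntegral.integral_add (by apply Continuous.intervalIntegrable; fun_prop)
        (by apply Continuous.intervalIntegrable; fun_prop)]
      linarith [integral_sum_sum_cos_sub_mul_inner_pow_le hn hx d,
        integral_sum_sum_cos_sub_mul_inner_pow_le hn hy d]
    simp only [intervalIntegral.integral_const_mul]
    calc _ ≤ π / 4 * ∑ d ∈ s, |a d| * (4 * π * Fintype.card ι) := by
          gcongr with d
          exact hbound d
      _ = _ := by rw [mul_sum, mul_sum, mul_sum]; exact sum_congr rfl fun d _ => by ring
  have key := (intervalIntegral.integral_mono_on (by positivity) (by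
    apply Continuous.intervalIntegrable; fun_prop) (by
    apply Continuous.intervalIntegrable; fun_prop) hpointwise).trans hintegral
  rw [integral_sawtooth_mul_sum_sum_sin] at key
  exact le_of_mul_le_mul_left key pi_pos

end

theorem continuous_connective_upper_bound_general
    {H : Type*} [NormedAddCommGroup H] [InnerProductSpace ℝ H]
    (ε : ℝ) (hε : ε ∈ Set.Ioo (0 : ℝ) 1) (g : ℝ → ℝ)
    (D : ℕ) (a : ℕ → ℝ)
    (happrox : ∀ t ∈ Set.Icc (-1 : ℝ) 1,
        |g t - (a 0 + ∑ d ∈ Finset.Icc 1 D, a d * t ^ d)| ≤ ε / 4)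
    (k : ℕ) (x y : Fin k → H)
    (hx : ∀ i, ‖x i‖ ≤ 1) (hy : ∀ i, ‖y i‖ ≤ 1)
    (hhg : ∀ i j : Fin k, i < j → ε ≤ g ⟪x i, y j⟫ - g ⟪x j, y i⟫) :
    Real.log k ≤ 2 * π * (∑ d ∈ Finset.Icc 1 D, |a d|) / ε + 1 := by
  have hε₀ : 0 < ε := hε.1
  have hinner : ∀ i j, ⟪x i, y j⟫ ∈ Set.Icc (-1 : ℝ) 1 := fun i j =>
    abs_le.mp ((abs_real_inner_le_norm _ _).trans (mul_le_one₀ (hx i) (norm_nonneg _) (hy j)))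
  have hgap : ∀ i j, i < j → ε / 2 ≤ (∑ d ∈ Icc 1 D, a d * ⟪x i, y j⟫ ^ d) -
      ∑ d ∈ Icc 1 D, a d * ⟪x j, y i⟫ ^ d := fun i j hij => by
    linarith [abs_le.mp (happrox _ (hinner i j)), abs_le.mp (happrox _ (hinner j i)), hhg i j hij]
  have hlower := mul_natCast_mul_log_sub_le_sum_sum_div_sub (by positivity) hgap
  have hupper := sum_sum_poly_inner_div_sub_le (n := fun i : Fin k => ((i : ℕ) : ℤ))
    (fun i j h => Fin.ext (Nat.cast_injective h)) hx hy (Icc 1 D) a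
  push_cast at hupper
  rw [Fintype.card_fin] at hupper
  rcases k.eq_zero_or_pos with rfl | hk
  · simp only [Nat.cast_zero, log_zero]
    positivity
  have hk' : (0 : ℝ) < k := Nat.cast_pos.mpr hk
  rw [← sub_le_iff_le_add, le_div_iff₀ hε₀]
  refine le_of_mul_le_mul_left ?_ hk'
  linarith

/-- Upper bound for continuous connectives via polynomial approximation. -/
theorem continuous_connective_upper_bound
    {H : Type*} [NormedAddCommGroup H] [InnerProductSpace ℝ H]
    (ε : ℝ) (hε : ε ∈ Set.Ioo (0 : ℝ) 1) (g : ℝ → ℝ)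
    (D : ℕ) (a : ℕ → ℝ)
    (happrox : ∀ t ∈ Set.Icc (-1 : ℝ) 1,
        |g t - (a 0 + ∑ d ∈ Finset.Icc 1 D, a d * t ^ d)| ≤ ε / 4)
    (hA : 0 < ∑ d ∈ Finset.Icc 1 D, |a d|)
    (k : ℕ) (x y : Fin k → H)
    (hx : ∀ i, ‖x i‖ ≤ 1) (hy : ∀ i, ‖y i‖ ≤ 1)
    (hhg : ∀ i j : Fin k, i < j → ε ≤ g ⟪x i, y j⟫ - g ⟪x j, y i⟫) :
    Real.log k ≤ 2 * π * (∑ d ∈ Finset.Icc 1 D, |a d|) / ε + 1 :=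
  continuous_connective_upper_bound_general ε hε g D a happrox k x y hx hy hhg
end

section
/- Continuous VC-dimension of the inner product, lower bound: Let ε ∈ (0,1) and let d be a positive integer with d ≤ 4/ε². Let H be a real inner product space containing an orthonormal family e_1,…,e_d (e.g. dim H ≥ d). Then there exist vectors x_1,…,x_d in the closed unit ball of H, a threshold s ∈ ℝ, and for every subset S ⊆ {1,…,d} a vector y_S in the closed unit ball of H, such that for every S and every i: ⟪x_i, y_S⟫ ≥ s if i ∈ S, and ⟪x_i, y_S⟫ ≤ s − ε if i ∉ S. -/
/-!
Take `x i = e i`, threshold `ε / 2`, and `y S = (ε / 2) • ∑ j, (±1) • e j` with sign `+1`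
exactly on `S`. Orthonormality gives `⟪e i, y S⟫ = ±ε / 2` and `‖y S‖ = (ε / 2) √d`, which is
at most `1` precisely because `d ≤ 4 / ε²`.
-/

open RealInnerProductSpace

def signPattern {ι : Type*} [DecidableEq ι] (S : Finset ι) (j : ι) : ℝ :=
  if j ∈ S then 1 else -1

lemma signPattern_sq {ι : Type*} [DecidableEq ι] (S : Finset ι) (j : ι) :
    signPattern S j ^ 2 = 1 := by
  unfold signPattern
  split_ifs <;> norm_num

lemma Orthonormal.norm_sum_smul_of_sq_eq_one {ι H : Type*} [Fintype ι] [NormedAddCommGroup H]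
    [InnerProductSpace ℝ H] {e : ι → H} (he : Orthonormal ℝ e) {l : ι → ℝ}
    (hl : ∀ j, l j ^ 2 = 1) : ‖∑ j, l j • e j‖ = √(Fintype.card ι) := by
  have hinner : ⟪∑ j, l j • e j, ∑ j, l j • e j⟫ = Fintype.card ι := by
    rw [he.inner_sum]
    simp [← sq, hl]
  rw [norm_eq_sqrt_real_inner, hinner]

lemma half_mul_sqrt_le_one {ε d : ℝ} (hε : 0 < ε) (hd : 0 ≤ d) (hdε : d ≤ 4 / ε ^ 2) :
    ε / 2 * √d ≤ 1 := by
  have hsq : ε ^ 2 * √d ^ 2 ≤ 4 := by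
    rw [Real.sq_sqrt hd]
    rwa [le_div_iff₀' (by positivity)] at hdε
  nlinarith [Real.sqrt_nonneg d]

theorem vc_inner_product_lower_bound_general
    {H : Type*} [NormedAddCommGroup H] [InnerProductSpace ℝ H]
    (ε : ℝ) (hε : ε ∈ Set.Ioo (0 : ℝ) 1) (d : ℕ)
    (hdε : (d : ℝ) ≤ 4 / ε ^ 2)
    (e : Fin d → H) (he : Orthonormal ℝ e) :
    ∃ (x : Fin d → H) (s : ℝ) (y : Finset (Fin d) → H),
      (∀ i, ‖x i‖ ≤ 1) ∧ (∀ S, ‖y S‖ ≤ 1) ∧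
      ∀ (S : Finset (Fin d)) (i : Fin d),
        (i ∈ S → s ≤ ⟪x i, y S⟫) ∧ (i ∉ S → ⟪x i, y S⟫ ≤ s - ε) := by
  have hε0 : 0 < ε := hε.1
  refine ⟨e, ε / 2, fun S => (ε / 2) • ∑ j, signPattern S j • e j,
    fun i => (he.1 i).le, fun S => ?_, fun S i => ?_⟩
  · rw [norm_smul, he.norm_sum_smul_of_sq_eq_one (signPattern_sq S), Fintype.card_fin,
      Real.norm_of_nonneg (by positivity)]
    exact half_mul_sqrt_le_one hε0 d.cast_nonneg hdε
  · rw [real_inner_smul_right, he.inner_right_fintype, signPattern]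
    constructor
    · intro hi
      simp [hi]
    · intro hi
      simp only [hi, if_false]
      linarith

/-- Continuous VC-dimension of the inner product: lower bound construction. -/
theorem vc_inner_product_lower_bound
    {H : Type*} [NormedAddCommGroup H] [InnerProductSpace ℝ H]
    (ε : ℝ) (hε : ε ∈ Set.Ioo (0 : ℝ) 1) (d : ℕ) (hd : 0 < d)
    (hdε : (d : ℝ) ≤ 4 / ε ^ 2)
    (e : Fin d → H) (he : Orthonormal ℝ e) :
    ∃ (x : Fin d → H) (s : ℝ) (y : Finset (Fin d) → H),
      (∀ i, ‖x i‖ ≤ 1) ∧ (∀ S, ‖y S‖ ≤ 1) ∧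
      ∀ (S : Finset (Fin d)) (i : Fin d),
        (i ∈ S → s ≤ ⟪x i, y S⟫) ∧ (i ∉ S → ⟪x i, y S⟫ ≤ s - ε) :=
  vc_inner_product_lower_bound_general ε hε d hdε e he
end

section
/- Continuous VC-dimension of the inner product, quantitative upper bound: Let ε ∈ (0,1), let H be a real inner product space, and let d be a positive integer. Suppose there exist vectors x_1,…,x_d in the closed unit ball of H, a threshold s ∈ ℝ, and for every subset S ⊆ {1,…,d} a vector y_S in the closed unit ball of H, such that for every S and every i: ⟪x_i, y_S⟫ ≥ s if i ∈ S, and ⟪x_i, y_S⟫ ≤ s − ε if i ∉ S. Then d ≤ 4/ε². -/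
open RealInnerProductSpace

private def sgn {d : ℕ} (σ : Fin d → Bool) (i : Fin d) : ℝ := if σ i then 1 else -1

private lemma sgn_sq {d : ℕ} (σ : Fin d → Bool) (i : Fin d) : sgn σ i * sgn σ i = 1 := by
  unfold sgn; split <;> norm_num

private lemma sgn_orth {d : ℕ} {i j : Fin d} (hij : i ≠ j) :
    ∑ σ : Fin d → Bool, sgn σ i * sgn σ j = 0 := by
  apply Finset.sum_ninvolution (fun σ => Function.update σ i (!σ i))
  · intro σ
    have h1 : sgn (Function.update σ i (!σ i)) i = -sgn σ i := by
      unfold sgn; simp only [Function.update_self]; cases σ i <;> simp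
    have h2 : sgn (Function.update σ i (!σ i)) j = sgn σ j := by
      unfold sgn; rw [Function.update_of_ne hij.symm]
    rw [h1, h2]; ring
  · intro σ _ h
    have := congrFun h i
    simp [Function.update_self] at this
  · intro σ; exact Finset.mem_univ _
  · intro σ
    funext k
    by_cases hk : k = i
    · subst hk; simp [Function.update_self]
    · simp [Function.update_of_ne hk]

/-- Continuous VC-dimension of the inner product: quantitative upper bound. -/
theorem vc_inner_product_upper_bound
    {H : Type*} [NormedAddCommGroup H] [InnerProductSpace ℝ H]
    (ε : ℝ) (hε : ε ∈ Set.Ioo (0 : ℝ) 1) (d : ℕ) (hd : 0 < d)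
    (x : Fin d → H) (s : ℝ) (y : Finset (Fin d) → H)
    (hx : ∀ i, ‖x i‖ ≤ 1) (hy : ∀ S, ‖y S‖ ≤ 1)
    (hvc : ∀ (S : Finset (Fin d)) (i : Fin d),
        (i ∈ S → s ≤ ⟪x i, y S⟫) ∧ (i ∉ S → ⟪x i, y S⟫ ≤ s - ε)) :
    (d : ℝ) ≤ 4 / ε ^ 2 := by
  obtain ⟨hε0, hε1⟩ := hε
  set v : (Fin d → Bool) → H := fun σ => ∑ i, sgn σ i • x i with hv
  -- expansion of the norm squared
  have expand : ∀ σ, ‖v σ‖ ^ 2 = ∑ i, ∑ j, sgn σ i * sgn σ j * ⟪x i, x j⟫ := by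
    intro σ
    rw [← real_inner_self_eq_norm_sq, hv]
    rw [sum_inner]
    congr 1; funext i
    rw [inner_sum]
    congr 1; funext j
    rw [real_inner_smul_left, real_inner_smul_right]
    ring
  have key : ∑ σ : Fin d → Bool, ‖v σ‖ ^ 2 = 2 ^ d * ∑ i, ‖x i‖ ^ 2 := by
    simp_rw [expand]
    rw [Finset.sum_comm]
    have : ∀ i : Fin d, ∑ σ : Fin d → Bool, ∑ j, sgn σ i * sgn σ j * ⟪x i, x j⟫
        = 2 ^ d * ‖x i‖ ^ 2 := by
      intro i
      rw [Finset.sum_comm]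
      have h2 : ∀ j : Fin d, ∑ σ : Fin d → Bool, sgn σ i * sgn σ j * ⟪x i, x j⟫
          = (if i = j then (2:ℝ) ^ d * ‖x i‖ ^ 2 else 0) := by
        intro j
        rw [← Finset.sum_mul]
        by_cases hij : i = j
        · subst hij
          simp only [if_pos rfl]
          have : ∑ σ : Fin d → Bool, sgn σ i * sgn σ i = 2 ^ d := by
            simp_rw [sgn_sq]
            simp [Finset.card_univ]
          rw [this, real_inner_self_eq_norm_sq]
          simp
        · rw [sgn_orth hij, if_neg hij, zero_mul]
      simp_rw [h2]
      simp
    simp_rw [this]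
    rw [Finset.mul_sum]
  -- choose a good sign pattern
  have havg : ∑ σ : Fin d → Bool, ‖v σ‖ ^ 2 ≤ ∑ _σ : Fin d → Bool, (d : ℝ) := by
    rw [key]
    simp only [Finset.sum_const, Finset.card_univ, Fintype.card_fun, Fintype.card_bool,
      Fintype.card_fin, nsmul_eq_mul]
    have : ∑ i, ‖x i‖ ^ 2 ≤ (d : ℝ) := by
      calc ∑ i, ‖x i‖ ^ 2 ≤ ∑ _i : Fin d, (1:ℝ) := by
            apply Finset.sum_le_sum
            intro i _
            have := hx i
            nlinarith [norm_nonneg (x i)]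
        _ = d := by simp
    push_cast
    nlinarith [this, pow_pos (by norm_num : (0:ℝ) < 2) d]
  obtain ⟨σ, -, hσ⟩ := Finset.exists_le_of_sum_le (Finset.univ_nonempty) havg
  -- the separating vector
  set S : Finset (Fin d) := Finset.univ.filter (fun i => σ i = true) with hS
  set z : H := y S - y Sᶜ with hz
  have hzn : ‖z‖ ≤ 2 := by
    calc ‖z‖ ≤ ‖y S‖ + ‖y Sᶜ‖ := norm_sub_le _ _
      _ ≤ 1 + 1 := add_le_add (hy S) (hy Sᶜ)
      _ = 2 := by norm_num
  have hlow : (d : ℝ) * ε ≤ ⟪v σ, z⟫ := by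
    rw [hv, sum_inner]
    have : ∀ i : Fin d, ε ≤ ⟪sgn σ i • x i, z⟫ := by
      intro i
      rw [real_inner_smul_left, hz, inner_sub_right]
      by_cases hi : σ i = true
      · have hiS : i ∈ S := by simp [hS, hi]
        have hiT : i ∉ Sᶜ := by simpa using hiS
        have h1 := (hvc S i).1 hiS
        have h2 := (hvc Sᶜ i).2 hiT
        have : sgn σ i = 1 := by simp [sgn, hi]
        rw [this]; linarith
      · have hiS : i ∉ S := by simp [hS, hi]
        have hiT : i ∈ Sᶜ := by simpa using hiS
        have h1 := (hvc S i).2 hiS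
        have h2 := (hvc Sᶜ i).1 hiT
        have : sgn σ i = -1 := by simp [sgn, hi]
        rw [this]; linarith
    calc (d : ℝ) * ε = ∑ _i : Fin d, ε := by simp [mul_comm]
      _ ≤ ∑ i, ⟪sgn σ i • x i, z⟫ := Finset.sum_le_sum (fun i _ => this i)
  have hcs : ⟪v σ, z⟫ ≤ ‖v σ‖ * 2 := by
    calc ⟪v σ, z⟫ ≤ ‖v σ‖ * ‖z‖ := real_inner_le_norm _ _
      _ ≤ ‖v σ‖ * 2 := by nlinarith [norm_nonneg (v σ)]
  have hde : (d : ℝ) * ε ≤ ‖v σ‖ * 2 := le_trans hlow hcs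
  rw [le_div_iff₀ (by positivity)]
  have hd' : (0:ℝ) < d := by exact_mod_cast hd
  have hsq : ((d:ℝ) * ε) * ((d:ℝ) * ε) ≤ (‖v σ‖ * 2) * (‖v σ‖ * 2) :=
    mul_le_mul hde hde (by positivity) (by positivity)
  nlinarith [norm_nonneg (v σ), hσ, hsq, hd']
end

section
/- Continuous VC-dimension is bounded by the dimension: Let H be a real inner product space of finite dimension n, let ε > 0, and let d be a positive integer. Suppose there exist vectors x_1,…,x_d in the closed unit ball of H, a threshold s ∈ ℝ, and for every subset S ⊆ {1,…,d} a vector y_S in the closed unit ball of H, such that for every S and every i: ⟪x_i, y_S⟫ ≥ s if i ∈ S, and ⟪x_i, y_S⟫ ≤ s − ε if i ∉ S. Then d ≤ n. -/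
open RealInnerProductSpace

/-- The continuous VC-dimension of the inner product is bounded by the dimension. -/
theorem vc_inner_product_le_dim
    {H : Type*} [NormedAddCommGroup H] [InnerProductSpace ℝ H]
    [FiniteDimensional ℝ H] (n : ℕ) (hn : Module.finrank ℝ H = n)
    (ε : ℝ) (hε : 0 < ε) (d : ℕ) (hd : 0 < d)
    (x : Fin d → H) (s : ℝ) (y : Finset (Fin d) → H)
    (hx : ∀ i, ‖x i‖ ≤ 1) (hy : ∀ S, ‖y S‖ ≤ 1)
    (hvc : ∀ (S : Finset (Fin d)) (i : Fin d),
        (i ∈ S → s ≤ ⟪x i, y S⟫) ∧ (i ∉ S → ⟪x i, y S⟫ ≤ s - ε)) :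
    d ≤ n := by
  by_contra hlt
  push_neg at hlt
  have hdep : ¬ LinearIndependent ℝ x := by
    intro h
    have := h.fintype_card_le_finrank
    simp only [Fintype.card_fin, hn] at this
    omega
  rw [Fintype.not_linearIndependent_iff] at hdep
  obtain ⟨g, hg0, i0, hi0⟩ := hdep
  set S : Finset (Fin d) := Finset.univ.filter (fun i => 0 < g i) with hSdef
  set T : Finset (Fin d) := Finset.univ.filter (fun i => ¬ 0 < g i) with hTdef
  have hmemS : ∀ i, i ∈ S ↔ 0 < g i := by intro i; simp [hSdef]
  have hmemT : ∀ i, i ∈ T ↔ ¬ 0 < g i := by intro i; simp [hTdef]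
  have hnotT : ∀ i, i ∉ T ↔ 0 < g i := by intro i; simp [hTdef]
  have hzero : ∀ z : H, ∑ i, g i * ⟪x i, z⟫ = 0 := by
    intro z
    have : ⟪∑ i, g i • x i, z⟫ = 0 := by rw [hg0, inner_zero_left]
    rw [sum_inner] at this
    simpa [real_inner_smul_left] using this
  set A : ℝ := ∑ i ∈ S, g i with hA
  set B : ℝ := ∑ i ∈ T, -g i with hB
  -- pairing with y S
  have h1 : s * A - (s - ε) * B ≤ 0 := by
    have hsum : ∑ i ∈ S, g i * ⟪x i, y S⟫ + ∑ i ∈ T, g i * ⟪x i, y S⟫ = 0 := by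
      have h := hzero (y S)
      rw [← Finset.sum_filter_add_sum_filter_not Finset.univ (fun i => 0 < g i)
        (fun i => g i * ⟪x i, y S⟫)] at h
      exact h
    have hS1 : ∑ i ∈ S, g i * s ≤ ∑ i ∈ S, g i * ⟪x i, y S⟫ := by
      apply Finset.sum_le_sum
      intro i hi
      exact mul_le_mul_of_nonneg_left ((hvc S i).1 hi) (le_of_lt ((hmemS i).1 hi))
    have hT1 : ∑ i ∈ T, g i * (s - ε) ≤ ∑ i ∈ T, g i * ⟪x i, y S⟫ := by
      apply Finset.sum_le_sum
      intro i hi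
      have hin : i ∉ S := by rw [hmemS]; exact (hmemT i).1 hi
      have hgi : g i ≤ 0 := le_of_not_gt ((hmemT i).1 hi)
      exact mul_le_mul_of_nonpos_left ((hvc S i).2 hin) hgi
    have e1 : ∑ i ∈ S, g i * s = s * A := by rw [hA, Finset.mul_sum]; exact Finset.sum_congr rfl fun i _ => by ring
    have e2 : ∑ i ∈ T, g i * (s - ε) = -((s - ε) * B) := by
      rw [hB, Finset.mul_sum, ← Finset.sum_neg_distrib]
      apply Finset.sum_congr rfl; intro i _; ring
    nlinarith [hS1, hT1, hsum]
  -- pairing with y T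
  have h2 : 0 ≤ (s - ε) * A - s * B := by
    have hsum : ∑ i ∈ S, g i * ⟪x i, y T⟫ + ∑ i ∈ T, g i * ⟪x i, y T⟫ = 0 := by
      have h := hzero (y T)
      rw [← Finset.sum_filter_add_sum_filter_not Finset.univ (fun i => 0 < g i)
        (fun i => g i * ⟪x i, y T⟫)] at h
      exact h
    have hS2 : ∑ i ∈ S, g i * ⟪x i, y T⟫ ≤ ∑ i ∈ S, g i * (s - ε) := by
      apply Finset.sum_le_sum
      intro i hi
      have hin : i ∉ T := (hnotT i).2 ((hmemS i).1 hi)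
      exact mul_le_mul_of_nonneg_left ((hvc T i).2 hin) (le_of_lt ((hmemS i).1 hi))
    have hT2 : ∑ i ∈ T, g i * ⟪x i, y T⟫ ≤ ∑ i ∈ T, g i * s := by
      apply Finset.sum_le_sum
      intro i hi
      have hgi : g i ≤ 0 := le_of_not_gt ((hmemT i).1 hi)
      exact mul_le_mul_of_nonpos_left ((hvc T i).1 hi) hgi
    have e1 : ∑ i ∈ S, g i * (s - ε) = (s - ε) * A := by rw [hA, Finset.mul_sum]; exact Finset.sum_congr rfl fun i _ => by ring
    have e2 : ∑ i ∈ T, g i * s = -(s * B) := by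
      rw [hB, Finset.mul_sum, ← Finset.sum_neg_distrib]
      apply Finset.sum_congr rfl; intro i _; ring
    nlinarith [hS2, hT2, hsum]
  have hApos : 0 ≤ A := Finset.sum_nonneg (fun i hi => le_of_lt ((hmemS i).1 hi))
  have hBpos : 0 ≤ B := Finset.sum_nonneg (fun i hi => by
    have := le_of_not_gt ((hmemT i).1 hi); linarith)
  have hAB : 0 < A + B := by
    by_cases h : 0 < g i0
    · have : 0 < A := Finset.sum_pos' (fun i hi => le_of_lt ((hmemS i).1 hi))
        ⟨i0, (hmemS i0).2 h, h⟩
      linarith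
    · have hneg : 0 < -g i0 := by
        rcases lt_trichotomy (g i0) 0 with h' | h' | h'
        · linarith
        · exact absurd h' hi0
        · exact absurd h' h
      have : 0 < B := Finset.sum_pos' (fun i hi => by
        have := le_of_not_gt ((hmemT i).1 hi); linarith) ⟨i0, (hmemT i0).2 h, hneg⟩
      linarith
  nlinarith [h1, h2, hAB, hε]
end
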